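/- arXiv:0803.4297 — 11 statements merged into one kernel-verified Lean document; each statement's English description precedes it below -/
import Mathlib

section
/- Let r ≥ 1 and k ≥ 0 be integers and let F be the prim normal form map. The Fréchet derivative of F at a point (t, b, c) fails to be injective if and only if p_i′(t) = 0 for every 0 ≤ i ≤ k (where p_i′ denotes the derivative of p_i in its variable); moreover, when this holds, the kernel of the derivative of F at (t, b, c) is exactly the one-dimensional line spanned by the coordinate direction (1, 0, 0) (the t-axis). -/
/-!
The prim normal form is `(t, y) ↦ (g (t, y), y)`, a graph over the parameters `y = (b, c)`.
Its derivative is block triangular with the identity in the `y`-block, so a kernel vector has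
`y`-component `0` and `t`-component killed by the partial derivative `∂g/∂t = (p_i'(t))_i`.
Hence the kernel is the `t`-axis when all `p_i'(t)` vanish, and trivial otherwise.
-/

open Polynomial

/-- The family of polynomials `p_0, p_1, …, p_k` of the prim normal form:
`p_0(x) = x^(r+1) + ∑_{m=1}^{r-1} b_m x^m` and, for `1 ≤ i ≤ k`,
`p_i(x) = ∑_{m=1}^{r} c_{i,m} x^m`. -/
noncomputable def primPoly (r k : ℕ) (b : Fin (r - 1) → ℝ) (c : Fin k × Fin r → ℝ) :
    Fin (k + 1) → Polynomial ℝ :=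
  Fin.cons (X ^ (r + 1) + ∑ m : Fin (r - 1), C (b m) * X ^ ((m : ℕ) + 1))
    (fun i => ∑ m : Fin r, C (c (i, m)) * X ^ ((m : ℕ) + 1))

/-- The prim normal form map
`F(t, b, c) = ((p_0(t), …, p_k(t)), b, c)`. -/
noncomputable def primNormalForm (r k : ℕ) :
    ℝ × (Fin (r - 1) → ℝ) × (Fin k × Fin r → ℝ) →
      (Fin (k + 1) → ℝ) × (Fin (r - 1) → ℝ) × (Fin k × Fin r → ℝ) :=
  fun x => (fun i => (primPoly r k x.2.1 x.2.2 i).eval x.1, x.2.1, x.2.2)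

section GraphMap

variable {𝕜 Y G : Type*} [NontriviallyNormedField 𝕜] [NormedAddCommGroup Y] [NormedSpace 𝕜 Y]
  [NormedAddCommGroup G] [NormedSpace 𝕜 G]

theorem fderiv_prodMk_snd {g : 𝕜 × Y → G} {p : 𝕜 × Y} (hg : DifferentiableAt 𝕜 g p) :
    fderiv 𝕜 (fun x => (g x, x.2)) p = (fderiv 𝕜 g p).prod (ContinuousLinearMap.snd 𝕜 𝕜 Y) :=
  (hg.hasFDerivAt.prodMk hasFDerivAt_snd).fderiv

theorem fderiv_apply_one_zero {g : 𝕜 × Y → G} {x : 𝕜} {y : Y}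
    (hg : DifferentiableAt 𝕜 g (x, y)) :
    fderiv 𝕜 g (x, y) (1, 0) = deriv (fun s => g (s, y)) x :=
  (hg.hasFDerivAt.comp_hasDerivAt x ((hasDerivAt_id x).prodMk (hasDerivAt_const x y))).deriv.symm

namespace ContinuousLinearMap

variable (L : 𝕜 × Y →L[𝕜] G)

theorem mem_ker_prod_snd_iff {v : 𝕜 × Y} :
    v ∈ LinearMap.ker (L.prod (snd 𝕜 𝕜 Y)).toLinearMap ↔ v.2 = 0 ∧ v.1 • L (1, 0) = 0 := by
  obtain ⟨a, y⟩ := v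
  simp only [LinearMap.mem_ker, coe_coe, prod_apply, coe_snd', Prod.mk_eq_zero]
  constructor
  · rintro ⟨hL, rfl⟩
    refine ⟨rfl, ?_⟩
    simpa [← map_smul] using hL
  · rintro ⟨rfl, hL⟩
    refine ⟨?_, rfl⟩
    simpa [← map_smul] using hL

theorem injective_prod_snd_iff :
    Function.Injective (L.prod (snd 𝕜 𝕜 Y)) ↔ L (1, 0) ≠ 0 := by
  rw [← coe_coe, ← LinearMap.ker_eq_bot, Submodule.eq_bot_iff]
  simp only [mem_ker_prod_snd_iff, and_imp]
  constructor
  · intro h hL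
    simpa using h (1, 0) rfl (by simp [hL])
  · intro hL ⟨a, y⟩ hy ha
    simp_all [smul_eq_zero]

theorem ker_prod_snd_of_apply_eq_zero (hL : L (1, 0) = 0) :
    LinearMap.ker (L.prod (snd 𝕜 𝕜 Y)).toLinearMap = Submodule.span 𝕜 {(1, 0)} := by
  ext v
  rw [mem_ker_prod_snd_iff, Submodule.mem_span_singleton]
  simp [hL, Prod.ext_iff, eq_comm]

end ContinuousLinearMap

end GraphMap

theorem differentiable_eval_primPoly (r k : ℕ) :
    Differentiable ℝ fun x : ℝ × (Fin (r - 1) → ℝ) × (Fin k × Fin r → ℝ) =>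
      fun i => (primPoly r k x.2.1 x.2.2 i).eval x.1 := by
  refine differentiable_pi.2 fun i => ?_
  induction i using Fin.cases <;>
    simp only [primPoly, Fin.cons_zero, Fin.cons_succ, eval_add, eval_pow, eval_X, eval_finsetSum,
      eval_mul, eval_C] <;>
    fun_prop

theorem stmt0_general (r k : ℕ) (t : ℝ) (b : Fin (r - 1) → ℝ)
    (c : Fin k × Fin r → ℝ) :
    (¬ Function.Injective (fderiv ℝ (primNormalForm r k) (t, b, c)) ↔
      ∀ i : Fin (k + 1), (derivative (primPoly r k b c i)).eval t = 0) ∧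
    ((∀ i : Fin (k + 1), (derivative (primPoly r k b c i)).eval t = 0) →
      LinearMap.ker (fderiv ℝ (primNormalForm r k) (t, b, c)).toLinearMap =
        Submodule.span ℝ {((1 : ℝ), (0 : Fin (r - 1) → ℝ), (0 : Fin k × Fin r → ℝ))}) := by
  set g := fun x : ℝ × (Fin (r - 1) → ℝ) × (Fin k × Fin r → ℝ) =>
    fun i => (primPoly r k x.2.1 x.2.2 i).eval x.1
  have hg : DifferentiableAt ℝ g (t, b, c) := (differentiable_eval_primPoly r k).differentiableAt
  have hF : fderiv ℝ (primNormalForm r k) (t, b, c) =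
      (fderiv ℝ g (t, b, c)).prod (ContinuousLinearMap.snd ℝ ℝ _) := fderiv_prodMk_snd hg
  have hpartial : fderiv ℝ g (t, b, c) (1, 0) =
      fun i => (derivative (primPoly r k b c i)).eval t := by
    rw [fderiv_apply_one_zero hg]
    exact (hasDerivAt_pi.2 fun i => (primPoly r k b c i).hasDerivAt t).deriv
  rw [hF, ContinuousLinearMap.injective_prod_snd_iff, not_not, hpartial, funext_iff]
  refine ⟨Iff.rfl, fun h => ?_⟩
  rw [ContinuousLinearMap.ker_prod_snd_of_apply_eq_zero _ (hpartial.trans (funext h))]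
  rfl

/-- The Fréchet derivative of the prim normal form `F` at `(t, b, c)` fails to be
injective iff `p_i'(t) = 0` for every `0 ≤ i ≤ k`; and in that case its kernel is
exactly the line spanned by the `t`-axis direction `(1, 0, 0)`. -/
theorem stmt0 (r k : ℕ) (hr : 1 ≤ r) (t : ℝ) (b : Fin (r - 1) → ℝ)
    (c : Fin k × Fin r → ℝ) :
    (¬ Function.Injective (fderiv ℝ (primNormalForm r k) (t, b, c)) ↔
      ∀ i : Fin (k + 1), (derivative (primPoly r k b c i)).eval t = 0) ∧
    ((∀ i : Fin (k + 1), (derivative (primPoly r k b c i)).eval t = 0) →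
      LinearMap.ker (fderiv ℝ (primNormalForm r k) (t, b, c)).toLinearMap =
        Submodule.span ℝ {((1 : ℝ), (0 : Fin (r - 1) → ℝ), (0 : Fin k × Fin r → ℝ))}) :=
  stmt0_general r k t b c
end

section
/- Let r ≥ 1 and j ≥ 1 be integers. Suppose (t_n) is a sequence of reals with t_n ≠ t for all n and t_n → t, and (y_n) is a sequence in ℝ^r with y_n → y and ‖y_n − y‖ / |t_n − t| → 0. If q_{y_n}^{(j−1)}(t_n) = 0 for every n and q_y^{(j−1)}(t) = 0, then q_y^{(j)}(t) = 0. -/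
/-!
Write `P = q_y^{(j-1)}`. Since `y ↦ q_y` is linear, `P(t_n) = P(t_n) - q_{y_n}^{(j-1)}(t_n)`
is `-q_{y_n - y}^{(j-1)}(t_n)`, which is `O(‖y_n - y‖)` because the coefficients of
`q_z^{(j-1)}` in `z` are continuous functions of the evaluation point. Hence
`P(t_n) = o(t_n - t)`, and as `P(t) = 0` the difference quotients of `P` at `t` along `t_n`
tend to `0`, so `P'(t) = q_y^{(j)}(t) = 0`.
-/

open Polynomial

/-- `q_y = ∑_{m=1}^r y_m X^m` for `y ∈ ℝ^r`. -/
noncomputable def qPoly (r : ℕ) (y : Fin r → ℝ) : Polynomial ℝ :=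
  ∑ m : Fin r, C (y m) * X ^ ((m : ℕ) + 1)

open Filter Topology Asymptotics

theorem HasDerivAt.eq_of_tendsto_slope {𝕜 F : Type*} [NontriviallyNormedField 𝕜]
    [NormedAddCommGroup F] [NormedSpace 𝕜 F] {f : 𝕜 → F} {f' : F} {x : 𝕜}
    (hf : HasDerivAt f f' x) {α : Type*} {l : Filter α} [l.NeBot] {u : α → 𝕜}
    (hu : Tendsto u l (𝓝[≠] x)) {L : F} (hL : Tendsto (fun a => slope f x (u a)) l (𝓝 L)) :
    f' = L :=
  tendsto_nhds_unique ((hasDerivAt_iff_tendsto_slope.mp hf).comp hu) hL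

lemma qPoly_sub (r : ℕ) (y z : Fin r → ℝ) : qPoly r (y - z) = qPoly r y - qPoly r z := by
  simp only [qPoly, Pi.sub_apply, C_sub, sub_mul, Finset.sum_sub_distrib]

lemma eval_iterate_derivative_qPoly (r k : ℕ) (z : Fin r → ℝ) (s : ℝ) :
    (derivative^[k] (qPoly r z)).eval s =
      ∑ m : Fin r, z m * (derivative^[k] (X ^ ((m : ℕ) + 1) : ℝ[X])).eval s := by
  simp [qPoly, iterate_derivative_sum, iterate_derivative_C_mul, eval_finsetSum]

lemma isBigO_eval_iterate_derivative_qPoly {α : Type*} {l : Filter α} (r k : ℕ)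
    {w : α → Fin r → ℝ} {u : α → ℝ} {t : ℝ} (hu : Tendsto u l (𝓝 t)) :
    (fun a => (derivative^[k] (qPoly r (w a))).eval (u a)) =O[l] fun a => ‖w a‖ := by
  simp only [eval_iterate_derivative_qPoly]
  apply IsBigO.fun_sum
  intro m _
  have hcoeff : (fun a => w a m) =O[l] fun a => ‖w a‖ :=
    IsBigO.of_bound' (Eventually.of_forall fun a => by simpa using norm_le_pi_norm (w a) m)
  have hbounded := ((derivative^[k] (X ^ ((m : ℕ) + 1) : ℝ[X])).continuous.tendsto t).comp hu
  simpa using hcoeff.mul (hbounded.isBigO_one ℝ)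

theorem stmt1_general (r j : ℕ) (t : ℝ) (tn : ℕ → ℝ)
    (y : Fin r → ℝ) (yn : ℕ → Fin r → ℝ)
    (htn : ∀ n, tn n ≠ t)
    (htlim : Filter.Tendsto tn Filter.atTop (nhds t))
    (hratio : Filter.Tendsto (fun n => ‖yn n - y‖ / |tn n - t|) Filter.atTop (nhds 0))
    (hn : ∀ n, (derivative^[j - 1] (qPoly r (yn n))).eval (tn n) = 0)
    (hy : (derivative^[j - 1] (qPoly r y)).eval t = 0) :
    (derivative^[j] (qPoly r y)).eval t = 0 := by
  cases j with
  | zero => simpa using hy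
  | succ k =>
  simp only [Nat.add_sub_cancel] at hn hy
  set P := derivative^[k] (qPoly r y)
  have hPtn (n : ℕ) : P.eval (tn n) = -(derivative^[k] (qPoly r (yn n - y))).eval (tn n) := by
    rw [qPoly_sub, iterate_derivative_sub, eval_sub, hn n, zero_sub, neg_neg]
  have hsmall : (fun n => ‖yn n - y‖) =o[atTop] fun n => tn n - t := by
    rw [← isLittleO_norm_right, isLittleO_iff_tendsto]
    · simpa only [Real.norm_eq_abs] using hratio
    · intro n h
      exact absurd (sub_eq_zero.mp (norm_eq_zero.mp h)) (htn n)
  have hPo : (fun n => P.eval (tn n)) =o[atTop] fun n => tn n - t := by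
    simp only [hPtn]
    exact ((isBigO_eval_iterate_derivative_qPoly r k htlim).trans_isLittleO hsmall).neg_left
  have hslope : Tendsto (fun n => slope P.eval t (tn n)) atTop (𝓝 0) := by
    simpa [slope_def_field, hy] using hPo.tendsto_div_nhds_zero
  have htn' : Tendsto tn atTop (𝓝[≠] t) :=
    tendsto_nhdsWithin_of_tendsto_nhds_of_eventually_within _ htlim (Eventually.of_forall htn)
  rw [Function.iterate_succ_apply']
  exact (P.hasDerivAt t).eq_of_tendsto_slope htn' hslope

/-- If `t_n → t` with `t_n ≠ t`, `y_n → y` with `‖y_n - y‖/|t_n - t| → 0`, and the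
`(j-1)`-st derivative of `q_{y_n}` vanishes at `t_n` for every `n` as well as the
`(j-1)`-st derivative of `q_y` at `t`, then the `j`-th derivative of `q_y` vanishes
at `t`. -/
theorem stmt1 (r j : ℕ) (hr : 1 ≤ r) (hj : 1 ≤ j) (t : ℝ) (tn : ℕ → ℝ)
    (y : Fin r → ℝ) (yn : ℕ → Fin r → ℝ)
    (htn : ∀ n, tn n ≠ t)
    (htlim : Filter.Tendsto tn Filter.atTop (nhds t))
    (hylim : Filter.Tendsto yn Filter.atTop (nhds y))
    (hratio : Filter.Tendsto (fun n => ‖yn n - y‖ / |tn n - t|) Filter.atTop (nhds 0))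
    (hn : ∀ n, (derivative^[j - 1] (qPoly r (yn n))).eval (tn n) = 0)
    (hy : (derivative^[j - 1] (qPoly r y)).eval t = 0) :
    (derivative^[j] (qPoly r y)).eval t = 0 :=
  stmt1_general r j t tn y yn htn htlim hratio hn hy
end

section
/- Let r ≥ 1, k ≥ 0 and 1 ≤ j < r be integers and consider the prim normal form data. The set Σ_j = {(t, b, c) ∈ ℝ × ℝ^{r−1} × ℝ^{k·r} : p_i^{(l)}(t) = 0 for all 0 ≤ i ≤ k and all 1 ≤ l ≤ j} is the graph of a C^∞ function of the remaining coordinates: there exists an infinitely differentiable map ψ assigning to each (t, b_{j+1},…,b_{r−1}, (c_{i,m})_{1≤i≤k, j+1≤m≤r}) the values (b_1,…,b_j, (c_{i,m})_{1≤i≤k, 1≤m≤j}) such that Σ_j consists exactly of the points whose determined coordinates are given by ψ applied to their free coordinates. -/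
open Polynomial

section PrimAux
open Matrix

noncomputable def Dcoef (l m : ℕ) (t : ℝ) : ℝ := (m.descFactorial l : ℝ) * t ^ (m - l)

lemma eval_iter_deriv_X_pow (l m : ℕ) (t : ℝ) :
    (derivative^[l] (X ^ m : ℝ[X])).eval t = Dcoef l m t := by
  rw [Polynomial.iterate_derivative_X_pow_eq_C_mul]; simp [Dcoef]

lemma Dcoef_eq_zero {l m : ℕ} (h : m < l) (t : ℝ) : Dcoef l m t = 0 := by
  simp [Dcoef, Nat.descFactorial_eq_zero_iff_lt.2 h]

lemma contDiff_Dcoef (l m : ℕ) : ContDiff ℝ (⊤ : ℕ∞) (Dcoef l m) := by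
  unfold Dcoef; exact contDiff_const.mul (contDiff_id.pow _)

lemma iter_deriv_add (l : ℕ) (p q : ℝ[X]) :
    derivative^[l] (p + q) = derivative^[l] p + derivative^[l] q := by
  induction l generalizing p q with
  | zero => simp
  | succ n ih => simp [Function.iterate_succ_apply, derivative_add, ih]

lemma contDiff_det_comp {E : Type*} [NormedAddCommGroup E] [NormedSpace ℝ E] {n : ℕ}
    (f : Fin n → Fin n → E → ℝ) (hf : ∀ a b, ContDiff ℝ (⊤ : ℕ∞) (f a b)) :
    ContDiff ℝ (⊤ : ℕ∞) (fun x => (Matrix.of fun a b => f a b x).det) := by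
  have : (fun x => (Matrix.of fun a b => f a b x).det)
      = fun x => ∑ σ : Equiv.Perm (Fin n),
          ((Equiv.Perm.sign σ : ℤ) : ℝ) * ∏ i : Fin n, f (σ i) i x := by
    funext x
    rw [Matrix.det_apply]
    congr 1; funext σ
    rw [Units.smul_def, zsmul_eq_mul]
    rfl
  rw [this]
  refine ContDiff.sum fun σ _ => ContDiff.mul contDiff_const ?_
  exact contDiff_prod fun i _ => hf (σ i) i

noncomputable def Amat (j : ℕ) (t : ℝ) : Matrix (Fin j) (Fin j) ℝ :=
  Matrix.of fun l m => Dcoef ((l : ℕ) + 1) ((m : ℕ) + 1) t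

lemma Amat_det (j : ℕ) (t : ℝ) :
    (Amat j t).det = ∏ l : Fin j, (((l : ℕ) + 1).factorial : ℝ) := by
  rw [Matrix.det_of_upperTriangular]
  · refine Finset.prod_congr rfl fun l _ => ?_
    simp only [Amat, Matrix.of_apply, Dcoef, Nat.sub_self, pow_zero, mul_one,
      Nat.descFactorial_self]
  · intro a b h
    exact Dcoef_eq_zero (by simpa using h) t

lemma Amat_det_ne_zero (j : ℕ) (t : ℝ) : (Amat j t).det ≠ 0 := by
  rw [Amat_det]
  exact Finset.prod_ne_zero_iff.2 fun l _ => Nat.cast_ne_zero.2 (Nat.factorial_ne_zero _)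

lemma mulVec_iff {j : ℕ} (A : Matrix (Fin j) (Fin j) ℝ) (h : A.det ≠ 0)
    (x w : Fin j → ℝ) :
    (∀ l, A.mulVec x l + w l = 0) ↔ x = A⁻¹.mulVec (fun l => -(w l)) := by
  have hu : IsUnit A.det := isUnit_iff_ne_zero.2 h
  constructor
  · intro H
    have hx : A.mulVec x = fun l => -(w l) := funext fun l => by linarith [H l]
    rw [← hx, Matrix.mulVec_mulVec, Matrix.nonsing_inv_mul _ hu, Matrix.one_mulVec]
  · intro H l
    rw [H, Matrix.mulVec_mulVec, Matrix.mul_nonsing_inv _ hu, Matrix.one_mulVec]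
    ring

lemma contDiff_inv_entry (j : ℕ) (q l : Fin j) :
    ContDiff ℝ (⊤ : ℕ∞) (fun t => (Amat j t)⁻¹ q l) := by
  have key : (fun t => (Amat j t)⁻¹ q l)
      = fun t => (Ring.inverse (∏ i : Fin j, (((i : ℕ) + 1).factorial : ℝ))) *
          (Matrix.of fun a b =>
            (fun x : ℝ => if a = l then Pi.single q 1 b else
              Dcoef ((a : ℕ) + 1) ((b : ℕ) + 1) x) t).det := by
    funext t
    rw [Matrix.inv_def, Matrix.smul_apply, Matrix.adjugate_apply, Amat_det, smul_eq_mul]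
    congr 2
    ext a b
    rw [Matrix.updateRow_apply]
    by_cases h : a = l <;> simp [h, Amat]
  rw [key]
  refine contDiff_const.mul (contDiff_det_comp _ fun a b => ?_)
  by_cases h : a = l <;> simp only [h, if_true, if_false]
  · exact contDiff_const
  · exact contDiff_Dcoef _ _

lemma sum_split {N j : ℕ} (f : Fin N → ℝ) :
    ∑ m : Fin N, f m
      = (∑ m : {m : Fin N // (m : ℕ) < j}, f m.1)
        + ∑ m : {m : Fin N // j ≤ (m : ℕ)}, f m.1 := by
  rw [← Finset.sum_filter_add_sum_filter_not Finset.univ (fun m : Fin N => (m : ℕ) < j)]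
  congr 1
  · exact Finset.sum_subtype _ (by simp) f
  · exact Finset.sum_subtype _ (by simp [not_lt]) f

lemma sum_lt_eq {N j : ℕ} (hjN : j ≤ N) (f : Fin N → ℝ) :
    ∑ m : {m : Fin N // (m : ℕ) < j}, f m.1
      = ∑ q : Fin j, f ⟨(q : ℕ), lt_of_lt_of_le q.2 hjN⟩ := by
  let e : Fin j ≃ {m : Fin N // (m : ℕ) < j} :=
    { toFun := fun q => ⟨⟨(q : ℕ), lt_of_lt_of_le q.2 hjN⟩, q.2⟩
      invFun := fun m => ⟨(m.1 : ℕ), m.2⟩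
      left_inv := fun q => by ext; rfl
      right_inv := fun m => by ext; rfl }
  exact (Fintype.sum_equiv e (fun q => f ⟨(q : ℕ), lt_of_lt_of_le q.2 hjN⟩)
    (fun m => f m.1) (fun q => rfl)).symm

lemma mulVec_Amat (j : ℕ) (t : ℝ) (x : Fin j → ℝ) (l : Fin j) :
    (Amat j t).mulVec x l = ∑ q : Fin j, x q * Dcoef ((l : ℕ) + 1) ((q : ℕ) + 1) t := by
  simp [Matrix.mulVec, dotProduct, Amat, mul_comm]

lemma eval_iter_deriv_monomial (l : ℕ) (a : ℝ) (n : ℕ) (t : ℝ) :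
    (derivative^[l] (C a * X ^ n : ℝ[X])).eval t = a * Dcoef l n t := by
  rw [Polynomial.iterate_derivative_C_mul, eval_mul, eval_C, eval_iter_deriv_X_pow]

noncomputable def w0fun (r j : ℕ) (t : ℝ) (bf : {m : Fin (r - 1) // j ≤ (m : ℕ)} → ℝ)
    (l : Fin j) : ℝ :=
  Dcoef ((l : ℕ) + 1) (r + 1) t
    + ∑ m : {m : Fin (r - 1) // j ≤ (m : ℕ)}, bf m * Dcoef ((l : ℕ) + 1) ((m.1 : ℕ) + 1) t

noncomputable def wcfun (r k j : ℕ) (t : ℝ) (cf : Fin k × {m : Fin r // j ≤ (m : ℕ)} → ℝ)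
    (i : Fin k) (l : Fin j) : ℝ :=
  ∑ m : {m : Fin r // j ≤ (m : ℕ)}, cf (i, m) * Dcoef ((l : ℕ) + 1) ((m.1 : ℕ) + 1) t

noncomputable def psiFun (r k j : ℕ) :
    ℝ × ({m : Fin (r - 1) // j ≤ (m : ℕ)} → ℝ) × (Fin k × {m : Fin r // j ≤ (m : ℕ)} → ℝ) →
      ({m : Fin (r - 1) // (m : ℕ) < j} → ℝ) × (Fin k × {m : Fin r // (m : ℕ) < j} → ℝ) :=
  fun p =>
    (fun m => (Amat j p.1)⁻¹.mulVec (fun l => -(w0fun r j p.1 p.2.1 l)) ⟨(m.1 : ℕ), m.2⟩,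
     fun im => (Amat j p.1)⁻¹.mulVec (fun l => -(wcfun r k j p.1 p.2.2 im.1 l))
       ⟨(im.2.1 : ℕ), im.2.2⟩)

lemma contDiff_psiFun (r k j : ℕ) : ContDiff ℝ (⊤ : ℕ∞) (psiFun r k j) := by
  apply ContDiff.prodMk
  · rw [contDiff_pi]
    intro m
    have : (fun p : ℝ × ({m : Fin (r - 1) // j ≤ (m : ℕ)} → ℝ) ×
          (Fin k × {m : Fin r // j ≤ (m : ℕ)} → ℝ) =>
        (Amat j p.1)⁻¹.mulVec (fun l => -(w0fun r j p.1 p.2.1 l)) ⟨(m.1 : ℕ), m.2⟩)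
        = fun p => ∑ l : Fin j,
            (Amat j p.1)⁻¹ ⟨(m.1 : ℕ), m.2⟩ l * (-(w0fun r j p.1 p.2.1 l)) := by
      funext p; rfl
    rw [this]
    refine ContDiff.sum fun l _ => ContDiff.mul ?_ ?_
    · exact (contDiff_inv_entry j _ l).comp contDiff_fst
    · refine ContDiff.neg ?_
      unfold w0fun
      refine ContDiff.add ((contDiff_Dcoef _ _).comp contDiff_fst) ?_
      refine ContDiff.sum fun m' _ => ContDiff.mul ?_ ((contDiff_Dcoef _ _).comp contDiff_fst)
      exact (ContinuousLinearMap.proj (R := ℝ) (φ := fun _ : {m : Fin (r - 1) // j ≤ (m : ℕ)} => ℝ) m').contDiff.comp (contDiff_fst.comp contDiff_snd)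
  · rw [contDiff_pi]
    intro im
    have : (fun p : ℝ × ({m : Fin (r - 1) // j ≤ (m : ℕ)} → ℝ) ×
          (Fin k × {m : Fin r // j ≤ (m : ℕ)} → ℝ) =>
        (Amat j p.1)⁻¹.mulVec (fun l => -(wcfun r k j p.1 p.2.2 im.1 l)) ⟨(im.2.1 : ℕ), im.2.2⟩)
        = fun p => ∑ l : Fin j,
            (Amat j p.1)⁻¹ ⟨(im.2.1 : ℕ), im.2.2⟩ l * (-(wcfun r k j p.1 p.2.2 im.1 l)) := by
      funext p; rfl
    rw [this]
    refine ContDiff.sum fun l _ => ContDiff.mul ?_ ?_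
    · exact (contDiff_inv_entry j _ l).comp contDiff_fst
    · refine ContDiff.neg ?_
      unfold wcfun
      refine ContDiff.sum fun m' _ => ContDiff.mul ?_ ((contDiff_Dcoef _ _).comp contDiff_fst)
      exact (ContinuousLinearMap.proj (R := ℝ) (φ := fun _ : Fin k × {m : Fin r // j ≤ (m : ℕ)} => ℝ) (im.1, m')).contDiff.comp (contDiff_snd.comp contDiff_snd)
lemma forall_range_iff {j : ℕ} (Q : ℕ → Prop) :
    (∀ l : ℕ, 1 ≤ l → l ≤ j → Q l) ↔ ∀ l : Fin j, Q ((l : ℕ) + 1) := by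
  constructor
  · intro H l; exact H _ (by omega) (by omega)
  · intro H l h1 h2
    have := H ⟨l - 1, by omega⟩
    simpa [Nat.sub_add_cancel h1] using this

lemma eval0 (r k j : ℕ) (hjr : j < r) (b : Fin (r - 1) → ℝ) (t : ℝ) (l : Fin j) :
    (derivative^[(l : ℕ) + 1]
        (X ^ (r + 1) + ∑ m : Fin (r - 1), C (b m) * X ^ ((m : ℕ) + 1))).eval t
      = (Amat j t).mulVec (fun q => b ⟨(q : ℕ), by omega⟩) l
        + w0fun r j t (fun m => b m.1) l := by
  rw [iter_deriv_add, Polynomial.iterate_derivative_sum, eval_add, Polynomial.eval_finset_sum,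
    eval_iter_deriv_X_pow]
  rw [Finset.sum_congr rfl (fun m _ => eval_iter_deriv_monomial ((l : ℕ) + 1) (b m) _ t)]
  rw [sum_split (j := j) (f := fun m : Fin (r - 1) =>
    b m * Dcoef ((l : ℕ) + 1) ((m : ℕ) + 1) t)]
  rw [sum_lt_eq (hjN := show j ≤ r - 1 by omega) (f := fun m : Fin (r - 1) =>
    b m * Dcoef ((l : ℕ) + 1) ((m : ℕ) + 1) t)]
  rw [mulVec_Amat]
  have hS : (∑ q : Fin j, (fun m : Fin (r - 1) =>
        b m * Dcoef ((l : ℕ) + 1) ((m : ℕ) + 1) t) ⟨(q : ℕ), lt_of_lt_of_le q.2 (show j ≤ r - 1 by omega)⟩)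
      = ∑ q : Fin j, (fun q' : Fin j => b ⟨(q' : ℕ), by omega⟩) q
          * Dcoef ((l : ℕ) + 1) ((q : ℕ) + 1) t :=
    Finset.sum_congr rfl fun q _ => rfl
  rw [hS]
  unfold w0fun
  ring

lemma evalc (r k j : ℕ) (hjr : j < r) (c : Fin k × Fin r → ℝ) (i : Fin k) (t : ℝ) (l : Fin j) :
    (derivative^[(l : ℕ) + 1] (∑ m : Fin r, C (c (i, m)) * X ^ ((m : ℕ) + 1))).eval t
      = (Amat j t).mulVec (fun q => c (i, ⟨(q : ℕ), by omega⟩)) l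
        + wcfun r k j t (fun im => c (im.1, im.2.1)) i l := by
  rw [Polynomial.iterate_derivative_sum, Polynomial.eval_finset_sum]
  rw [Finset.sum_congr rfl (fun m _ => eval_iter_deriv_monomial ((l : ℕ) + 1) (c (i, m)) _ t)]
  rw [sum_split (j := j) (f := fun m : Fin r =>
    c (i, m) * Dcoef ((l : ℕ) + 1) ((m : ℕ) + 1) t)]
  rw [sum_lt_eq (hjN := le_of_lt hjr) (f := fun m : Fin r =>
    c (i, m) * Dcoef ((l : ℕ) + 1) ((m : ℕ) + 1) t)]
  rw [mulVec_Amat]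
  have hS : (∑ q : Fin j, (fun m : Fin r =>
        c (i, m) * Dcoef ((l : ℕ) + 1) ((m : ℕ) + 1) t) ⟨(q : ℕ), lt_of_lt_of_le q.2 (le_of_lt hjr)⟩)
      = ∑ q : Fin j, (fun q' : Fin j => c (i, ⟨(q' : ℕ), by omega⟩)) q
          * Dcoef ((l : ℕ) + 1) ((q : ℕ) + 1) t :=
    Finset.sum_congr rfl fun q _ => rfl
  rw [hS]
  unfold wcfun
  ring

end PrimAux

/-- The set `Σ_j` of `Σ^{1_j}`-points of the prim normal form is the graph of a `C^∞`
function `ψ` of the free coordinates `(t, b_{j+1},…,b_{r-1}, (c_{i,m})_{m ≥ j+1})`,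
with values the determined coordinates `(b_1,…,b_j, (c_{i,m})_{m ≤ j})`.
(A coordinate `b m : ℝ`, `m : Fin (r-1)`, represents `b_{m+1}`, so it is free
iff `j ≤ m` and determined iff `m < j`; similarly for `c`.) -/
theorem stmt4 (r k j : ℕ) (hr : 1 ≤ r) (hj1 : 1 ≤ j) (hjr : j < r) :
    ∃ ψ : ℝ × ({m : Fin (r - 1) // j ≤ (m : ℕ)} → ℝ) ×
            (Fin k × {m : Fin r // j ≤ (m : ℕ)} → ℝ) →
          ({m : Fin (r - 1) // (m : ℕ) < j} → ℝ) × (Fin k × {m : Fin r // (m : ℕ) < j} → ℝ),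
      ContDiff ℝ (⊤ : ℕ∞) ψ ∧
      ∀ (t : ℝ) (b : Fin (r - 1) → ℝ) (c : Fin k × Fin r → ℝ),
        ((∀ i : Fin (k + 1), ∀ l : ℕ, 1 ≤ l → l ≤ j →
            (derivative^[l] (primPoly r k b c i)).eval t = 0) ↔
          ψ (t, fun m => b m.1, fun im => c (im.1, im.2.1)) =
            (fun m => b m.1, fun im => c (im.1, im.2.1))) := by

  refine ⟨psiFun r k j, contDiff_psiFun r k j, ?_⟩
  intro t b c
  have hdet := Amat_det_ne_zero j t
  -- step 1 : the vanishing conditions as linear systems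
  have hL : (∀ i : Fin (k + 1), ∀ l : ℕ, 1 ≤ l → l ≤ j →
        (derivative^[l] (primPoly r k b c i)).eval t = 0)
      ↔ ((∀ l : Fin j, (Amat j t).mulVec (fun q => b ⟨(q : ℕ), by omega⟩) l
            + w0fun r j t (fun m => b m.1) l = 0)
         ∧ ∀ i : Fin k, ∀ l : Fin j,
            (Amat j t).mulVec (fun q => c (i, ⟨(q : ℕ), by omega⟩)) l
              + wcfun r k j t (fun im => c (im.1, im.2.1)) i l = 0) := by
    rw [Fin.forall_fin_succ]
    apply and_congr
    · rw [forall_range_iff]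
      apply forall_congr'
      intro l
      simp only [primPoly, Fin.cons_zero]
      rw [eval0 r k j hjr b t l]
    · apply forall_congr'
      intro i
      rw [forall_range_iff]
      apply forall_congr'
      intro l
      simp only [primPoly, Fin.cons_succ]
      rw [evalc r k j hjr c i t l]
  rw [hL]
  -- step 2 : solve the linear systems
  rw [and_congr (mulVec_iff _ hdet _ _) (forall_congr' fun i => mulVec_iff _ hdet _ _)]
  -- step 3 : identify with the graph condition
  rw [Prod.ext_iff]
  apply and_congr
  · rw [funext_iff, funext_iff]
    constructor
    · intro H m
      exact (H ⟨(m.1 : ℕ), m.2⟩).symm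
    · intro H q
      exact (H ⟨⟨(q : ℕ), by omega⟩, q.2⟩).symm
  · constructor
    · intro H
      funext im
      exact (congrFun (H im.1) ⟨(im.2.1 : ℕ), im.2.2⟩).symm
    · intro H i
      funext q
      exact (congrFun H (i, ⟨⟨(q : ℕ), by omega⟩, q.2⟩)).symm
end

section
/- Let r ≥ 1 and k ≥ 0 be integers and let F be the prim normal form map. Suppose the point (t, b, c) satisfies p_i^{(l)}(t) = 0 for every 0 ≤ i ≤ k and every 1 ≤ l ≤ r. Then t = 0, b = 0 and c = 0; moreover, for any point (t′, b′, c′) with F(t′, b′, c′) = F(t, b, c) one has (t′, b′, c′) = (t, b, c). In other words, the only Σ^{1_r}-point of the normal form F is the origin, and it is not a multiple point of F. -/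
open Polynomial

/-
Only `p_0` involves `x^(r+1)`, and its `r`-th derivative is `(r+1)! · x`, since all other
monomials have degree `< r`; so `p_0^{(r)}(t) = 0` forces `t = 0`. At `t = 0` the `l`-th
derivative of a polynomial is `l!` times its `l`-th coefficient, so the vanishing of
`p_i^{(l)}(0)` for `1 ≤ l ≤ r` kills every `b_m` and `c_{i,m}`. Finally `F` preserves `(b, c)`,
and on the fibre `b = c = 0` it reads `t ↦ t^(r+1)`, which vanishes only at `0`.
-/

theorem Polynomial.coeff_eq_zero_of_iterate_derivative_eval_zero {R : Type*} [Semiring R]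
    [IsAddTorsionFree R] {p : R[X]} {l : ℕ} (h : (derivative^[l] p).eval 0 = 0) :
    p.coeff l = 0 := by
  rw [← coeff_zero_eq_eval_zero, coeff_iterate_derivative, zero_add, Nat.descFactorial_self] at h
  exact (nsmul_eq_zero_iff_right l.factorial_ne_zero).mp h

section PrimPoly

variable {r k : ℕ} (b : Fin (r - 1) → ℝ) (c : Fin k × Fin r → ℝ)

theorem iterate_derivative_primPoly_zero :
    derivative^[r] (primPoly r k b c 0) = C ((r + 1).descFactorial r : ℝ) * X := by
  have hlow : ∀ m : Fin (r - 1), derivative^[r] (C (b m) * X ^ ((m : ℕ) + 1)) = 0 := fun m =>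
    iterate_derivative_eq_zero <| (natDegree_C_mul_X_pow_le _ _).trans_lt (by omega)
  simp only [primPoly, Fin.cons_zero, iterate_map_add, iterate_derivative_sum, hlow,
    Finset.sum_const_zero, add_zero, iterate_derivative_X_pow_eq_C_mul, Nat.add_sub_cancel_left,
    pow_one]

theorem coeff_primPoly_zero_succ (m : Fin (r - 1)) :
    (primPoly r k b c 0).coeff ((m : ℕ) + 1) = b m := by
  have hm : (m : ℕ) ≠ r := by omega
  simp [primPoly, coeff_X_pow, Fin.val_inj, hm]

theorem coeff_primPoly_succ_succ (i : Fin k) (m : Fin r) :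
    (primPoly r k b c i.succ).coeff ((m : ℕ) + 1) = c (i, m) := by
  simp [primPoly, Fin.val_inj]

theorem primPoly_zero_zero : primPoly r k 0 0 0 = X ^ (r + 1) := by
  simp [primPoly]

end PrimPoly

theorem primNormalForm_eq_primNormalForm_zero_iff (r k : ℕ) (t : ℝ) (b : Fin (r - 1) → ℝ)
    (c : Fin k × Fin r → ℝ) :
    primNormalForm r k (t, b, c) = primNormalForm r k (0, 0, 0) ↔ (t, b, c) = (0, 0, 0) := by
  refine ⟨fun h => ?_, fun h => h ▸ rfl⟩
  simp only [primNormalForm, Prod.mk.injEq] at h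
  obtain ⟨hp, rfl, rfl⟩ := h
  have ht : t ^ (r + 1) = 0 := by simpa [primPoly_zero_zero] using congrFun hp 0
  simp [pow_eq_zero_iff'.mp ht]

/-- If `(t, b, c)` is a `Σ^{1_r}`-point of the prim normal form `F`
(i.e. `p_i^{(l)}(t) = 0` for all `0 ≤ i ≤ k` and `1 ≤ l ≤ r`), then
`(t, b, c) = (0, 0, 0)` and it is not a multiple point of `F`. -/
theorem stmt6 (r k : ℕ) (hr : 1 ≤ r) (t : ℝ) (b : Fin (r - 1) → ℝ)
    (c : Fin k × Fin r → ℝ)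
    (hsing : ∀ i : Fin (k + 1), ∀ l : ℕ, 1 ≤ l → l ≤ r →
      (derivative^[l] (primPoly r k b c i)).eval t = 0) :
    t = 0 ∧ b = 0 ∧ c = 0 ∧
    ∀ (t' : ℝ) (b' : Fin (r - 1) → ℝ) (c' : Fin k × Fin r → ℝ),
      primNormalForm r k (t', b', c') = primNormalForm r k (t, b, c) →
      (t', b', c') = (t, b, c) := by
  obtain rfl : t = 0 := by
    simpa [iterate_derivative_primPoly_zero b c, Nat.descFactorial_eq_zero_iff_lt]
      using hsing 0 r hr le_rfl
  have hcoeff (i : Fin (k + 1)) (l : ℕ) (h1 : 1 ≤ l) (h2 : l ≤ r) :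
      (primPoly r k b c i).coeff l = 0 :=
    coeff_eq_zero_of_iterate_derivative_eval_zero (hsing i l h1 h2)
  have hb : b = 0 := funext fun m => by
    rw [← coeff_primPoly_zero_succ b c m]
    exact hcoeff 0 _ (by omega) (by omega)
  have hc : c = 0 := funext fun ⟨i, m⟩ => by
    rw [← coeff_primPoly_succ_succ b c i m]
    exact hcoeff i.succ _ (by omega) (by omega)
  subst hb hc
  exact ⟨rfl, rfl, rfl, fun t' b' c' => (primNormalForm_eq_primNormalForm_zero_iff r k t' b' c').mp⟩
end

section
/- Let j ≥ 1 be an integer and h ∈ ℝ[X] any polynomial. For all real numbers u ≠ v there exists a unique tuple (a_1,…,a_{j+1}) ∈ ℝ^{j+1} such that the polynomial p = h + Σ_{m=1}^{j+1} a_m X^m satisfies p^{(l)}(u) = 0 for every 1 ≤ l ≤ j and p(u) = p(v). -/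
/-!
The conditions are `j + 1` linear equations in the `j + 1` unknowns `a`, so it suffices that the
homogeneous system has only the trivial solution. If `q = ∑ a_m X^{m+1}` satisfies it, then
`q - q(u)` vanishes to order `j + 1` at `u` and has degree at most `j + 1`, so it is
`c (X - u)^{j+1}`; evaluating at `v ≠ u` gives `c = 0`, and `q(0) = 0` then forces `q = 0`.
-/

open Polynomial

section CommSemiring

variable {R : Type*} [CommSemiring R]

noncomputable def polyWithoutConstTerm (n : ℕ) : (Fin (n + 1) → R) →ₗ[R] R[X] where
  toFun a := ∑ m : Fin (n + 1), C (a m) * X ^ ((m : ℕ) + 1)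
  map_add' a b := by simp [add_mul, Finset.sum_add_distrib]
  map_smul' r a := by simp [Finset.mul_sum, smul_eq_C_mul, mul_assoc]

theorem polyWithoutConstTerm_apply (n : ℕ) (a : Fin (n + 1) → R) :
    polyWithoutConstTerm n a = ∑ m : Fin (n + 1), C (a m) * X ^ ((m : ℕ) + 1) :=
  rfl

theorem coeff_polyWithoutConstTerm_zero (n : ℕ) (a : Fin (n + 1) → R) :
    (polyWithoutConstTerm n a).coeff 0 = 0 := by
  simp [polyWithoutConstTerm_apply, finsetSum_coeff]

theorem coeff_polyWithoutConstTerm_succ (n : ℕ) (a : Fin (n + 1) → R) (m : Fin (n + 1)) :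
    (polyWithoutConstTerm n a).coeff (m + 1) = a m := by
  simp [polyWithoutConstTerm_apply, finsetSum_coeff, Fin.val_inj]

theorem natDegree_polyWithoutConstTerm_le (n : ℕ) (a : Fin (n + 1) → R) :
    (polyWithoutConstTerm n a).natDegree ≤ n + 1 := by
  rw [polyWithoutConstTerm_apply]
  exact natDegree_sum_le_of_forall_le (n := n + 1) _ _ fun m _ =>
    (natDegree_C_mul_X_pow_le (a m) ((m : ℕ) + 1)).trans (by omega)

theorem polyWithoutConstTerm_injective (n : ℕ) :
    Function.Injective (polyWithoutConstTerm (R := R) n) := fun a b hab =>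
  funext fun m => by
    rw [← coeff_polyWithoutConstTerm_succ n a, hab, coeff_polyWithoutConstTerm_succ]

end CommSemiring

section CommRing

variable {R : Type*} [CommRing R]

noncomputable def flatnessConditions (n : ℕ) (u v : R) : R[X] →ₗ[R] (Fin (n + 1) → R) :=
  LinearMap.pi fun i =>
    if (i : ℕ) < n then leval u ∘ₗ derivative ^ ((i : ℕ) + 1) else leval u - leval v

theorem flatnessConditions_apply (n : ℕ) (u v : R) (p : R[X]) (i : Fin (n + 1)) :
    flatnessConditions n u v p i =
      if (i : ℕ) < n then (derivative^[(i : ℕ) + 1] p).eval u else p.eval u - p.eval v := by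
  by_cases hi : (i : ℕ) < n <;> simp [flatnessConditions, hi, Module.End.pow_apply]

theorem flatnessConditions_eq_zero_iff (n : ℕ) (u v : R) (p : R[X]) :
    flatnessConditions n u v p = 0 ↔
      (∀ l, 1 ≤ l → l ≤ n → (derivative^[l] p).eval u = 0) ∧ p.eval u = p.eval v := by
  rw [funext_iff, Fin.forall_fin_succ']
  simp only [flatnessConditions_apply, Fin.val_castSucc, Fin.is_lt, if_true, Fin.val_last,
    lt_irrefl, if_false, Pi.zero_apply, sub_eq_zero]
  refine and_congr_left' ⟨fun h l hl hln => ?_, fun h i => h _ (by omega) i.is_lt⟩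
  obtain ⟨k, rfl⟩ := Nat.exists_eq_add_of_le' hl
  exact h ⟨k, by omega⟩

end CommRing

section CharZero

variable {R : Type*} [CommRing R] [IsDomain R] [CharZero R]

theorem Polynomial.X_sub_C_pow_dvd_sub_C_eval {q : R[X]} {u : R} {n : ℕ}
    (hder : ∀ l, 1 ≤ l → l ≤ n → (derivative^[l] q).eval u = 0) :
    (X - C u) ^ (n + 1) ∣ q - C (q.eval u) := by
  rcases eq_or_ne (q - C (q.eval u)) 0 with hr | hr
  · rw [hr]
    exact dvd_zero _
  refine (le_rootMultiplicity_iff hr).1 (lt_rootMultiplicity_of_isRoot_iterate_derivative hr ?_)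
  intro m hm
  rcases Nat.eq_zero_or_pos m with rfl | hm0
  · simp
  · simpa [IsRoot, iterate_derivative_sub, iterate_derivative_C hm0] using hder m hm0 hm

theorem Polynomial.eq_zero_of_iterate_derivative_eval_eq_zero {q : R[X]} {u v : R} {n : ℕ}
    (huv : u ≠ v) (hdeg : q.natDegree ≤ n + 1) (hcoeff : q.coeff 0 = 0)
    (hder : ∀ l, 1 ≤ l → l ≤ n → (derivative^[l] q).eval u = 0)
    (heval : q.eval u = q.eval v) : q = 0 := by
  obtain ⟨s, hs⟩ := X_sub_C_pow_dvd_sub_C_eval hder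
  have hs0 : s = 0 := by
    by_contra hs0
    have hsdeg : s.natDegree = 0 := by
      have := congrArg natDegree hs
      rw [natDegree_sub_C, ((monic_X_sub_C u).pow _).natDegree_mul' hs0, natDegree_pow,
        natDegree_X_sub_C] at this
      omega
    have hsC := eq_C_of_natDegree_eq_zero hsdeg
    have hv : (v - u) ^ (n + 1) * s.coeff 0 = 0 := by
      rw [hsC] at hs
      simpa [heval] using (congrArg (eval v) hs).symm
    have hc := (mul_eq_zero.1 hv).resolve_left (pow_ne_zero _ (sub_ne_zero.2 huv.symm))
    exact hs0 (by rw [hsC, hc, C_0])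
  rw [hs0, mul_zero, sub_eq_zero] at hs
  rw [hs, coeff_C_zero] at hcoeff
  rw [hs, hcoeff, C_0]

theorem flatnessConditions_comp_polyWithoutConstTerm_injective (n : ℕ) {u v : R} (huv : u ≠ v) :
    Function.Injective (flatnessConditions n u v ∘ₗ polyWithoutConstTerm n) := by
  refine (injective_iff_map_eq_zero _).2 fun a ha => polyWithoutConstTerm_injective n ?_
  obtain ⟨hder, heval⟩ := (flatnessConditions_eq_zero_iff n u v _).1 ha
  rw [map_zero]
  exact eq_zero_of_iterate_derivative_eval_eq_zero huv (natDegree_polyWithoutConstTerm_le n a)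
    (coeff_polyWithoutConstTerm_zero n a) hder heval

end CharZero

theorem stmt7_general (j : ℕ) (h : Polynomial ℝ) (u v : ℝ) (huv : u ≠ v) :
    ∃! a : Fin (j + 1) → ℝ,
      (∀ l : ℕ, 1 ≤ l → l ≤ j →
        (derivative^[l] (h + ∑ m : Fin (j + 1), C (a m) * X ^ ((m : ℕ) + 1))).eval u = 0) ∧
      (h + ∑ m : Fin (j + 1), C (a m) * X ^ ((m : ℕ) + 1)).eval u =
        (h + ∑ m : Fin (j + 1), C (a m) * X ^ ((m : ℕ) + 1)).eval v := by
  have hinj := flatnessConditions_comp_polyWithoutConstTerm_injective j huv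
  have hbij : Function.Bijective (flatnessConditions j u v ∘ₗ polyWithoutConstTerm j) :=
    ⟨hinj, LinearMap.injective_iff_surjective.1 hinj⟩
  simp_rw [← polyWithoutConstTerm_apply, ← flatnessConditions_eq_zero_iff, map_add,
    ← LinearMap.comp_apply, add_eq_zero_iff_eq_neg']
  exact hbij.existsUnique _

/-- For `j ≥ 1`, `h ∈ ℝ[X]` and reals `u ≠ v` there is a unique tuple
`(a_1, …, a_{j+1})` such that `p = h + ∑_{m=1}^{j+1} a_m X^m` satisfies
`p^{(l)}(u) = 0` for every `1 ≤ l ≤ j` and `p(u) = p(v)`. -/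
theorem stmt7 (j : ℕ) (hj : 1 ≤ j) (h : Polynomial ℝ) (u v : ℝ) (huv : u ≠ v) :
    ∃! a : Fin (j + 1) → ℝ,
      (∀ l : ℕ, 1 ≤ l → l ≤ j →
        (derivative^[l] (h + ∑ m : Fin (j + 1), C (a m) * X ^ ((m : ℕ) + 1))).eval u = 0) ∧
      (h + ∑ m : Fin (j + 1), C (a m) * X ^ ((m : ℕ) + 1)).eval u =
        (h + ∑ m : Fin (j + 1), C (a m) * X ^ ((m : ℕ) + 1)).eval v :=
  stmt7_general j h u v huv
end

section
/- Let j ≥ 1 be an integer, h ∈ ℝ[X], and u, v real numbers with u ≠ v. If (a_1,…,a_{j+1}) ∈ ℝ^{j+1} is such that p = h + Σ_{m=1}^{j+1} a_m X^m satisfies p^{(l)}(u) = 0 for every 1 ≤ l ≤ j and p(u) = p(v), then the top unknown coefficient is given explicitly by a_{j+1} = (v − u)^{−(j+1)} · ( h(u) − h(v) + Σ_{i=1}^{j} h^{(i)}(u) · (v − u)^i / i! ). -/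
/-!
Put `q = ∑ a_m X^m`, of degree at most `j + 1`, so that its Taylor expansion at `u` is exact
after the term of order `j + 1`. In that expansion `q^{(i)}(u) = -h^{(i)}(u)` for `1 ≤ i ≤ j`,
`q^{(j+1)}(u) = (j + 1)! a_{j+1}`, and `p(u) = p(v)` says `q(v) - q(u) = h(u) - h(v)`.
-/

open Polynomial Finset Nat

namespace Polynomial

variable {K : Type*} [Field K] [CharZero K]

theorem eval_hasseDeriv_eq_eval_iterate_derivative_div (f : K[X]) (k : ℕ) (u : K) :
    (hasseDeriv k f).eval u = (derivative^[k] f).eval u / k ! := by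
  rw [← factorial_smul_hasseDeriv, LinearMap.smul_apply, eval_smul, nsmul_eq_mul,
    mul_div_cancel_left₀ _ (cast_ne_zero.mpr (factorial_ne_zero k))]

theorem eval_eq_sum_range_iterate_derivative {f : K[X]} {n : ℕ} (hn : f.natDegree < n)
    (u v : K) :
    f.eval v = ∑ i ∈ range n, (derivative^[i] f).eval u * (v - u) ^ i / i ! := by
  rw [← taylor_eval_sub (r := u), eval_eq_sum_range' (by rwa [natDegree_taylor])]
  refine sum_congr rfl fun i _ => ?_
  rw [taylor_coeff, eval_hasseDeriv_eq_eval_iterate_derivative_div, div_mul_eq_mul_div]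

variable {R : Type*} [CommSemiring R]

theorem natDegree_sum_C_mul_X_pow_succ_le {n : ℕ} (a : Fin n → R) :
    (∑ m : Fin n, C (a m) * X ^ ((m : ℕ) + 1)).natDegree ≤ n :=
  natDegree_sum_le_of_forall_le _ _ fun m _ =>
    (natDegree_C_mul_X_pow_le _ _).trans (by omega)

theorem iterate_derivative_sum_C_mul_X_pow_succ_self {n : ℕ} (a : Fin (n + 1) → R) :
    derivative^[n + 1] (∑ m : Fin (n + 1), C (a m) * X ^ ((m : ℕ) + 1)) =
      C ((n + 1)! * a (Fin.last n)) := by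
  have hlower := (natDegree_sum_C_mul_X_pow_succ_le fun m => a m.castSucc).trans_lt
    (lt_add_one n)
  rw [Fin.sum_univ_castSucc, iterate_map_add]
  simp only [Fin.val_castSucc, Fin.val_last]
  rw [iterate_derivative_eq_zero hlower, zero_add, iterate_derivative_C_mul,
    iterate_derivative_X_pow_eq_C_mul, descFactorial_self, Nat.sub_self, pow_zero, mul_one,
    ← C_mul, mul_comm]

end Polynomial

theorem stmt8_general (j : ℕ) (h : Polynomial ℝ) (u v : ℝ) (huv : u ≠ v)
    (a : Fin (j + 1) → ℝ)
    (hder : ∀ l : ℕ, 1 ≤ l → l ≤ j →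
      (derivative^[l] (h + ∑ m : Fin (j + 1), C (a m) * X ^ ((m : ℕ) + 1))).eval u = 0)
    (heq : (h + ∑ m : Fin (j + 1), C (a m) * X ^ ((m : ℕ) + 1)).eval u =
      (h + ∑ m : Fin (j + 1), C (a m) * X ^ ((m : ℕ) + 1)).eval v) :
    a (Fin.last j) =
      ((v - u) ^ (j + 1))⁻¹ *
        (h.eval u - h.eval v +
          ∑ i : Fin j,
            (derivative^[(i : ℕ) + 1] h).eval u * (v - u) ^ ((i : ℕ) + 1) /
              Nat.factorial ((i : ℕ) + 1)) := by
  set q := ∑ m : Fin (j + 1), C (a m) * X ^ ((m : ℕ) + 1)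
  have hlower : ∀ i ∈ range j,
      (derivative^[i + 1] q).eval u * (v - u) ^ (i + 1) / (i + 1)! =
        -((derivative^[i + 1] h).eval u * (v - u) ^ (i + 1) / (i + 1)!) := fun i hi => by
    have hvanish := hder (i + 1) (by omega) (by simpa using hi)
    rw [iterate_map_add, eval_add, add_eq_zero_iff_neg_eq'] at hvanish
    rw [← hvanish, neg_mul, neg_div, neg_neg]
  have htop : (derivative^[j + 1] q).eval u * (v - u) ^ (j + 1) / (j + 1)! =
      a (Fin.last j) * (v - u) ^ (j + 1) := by
    rw [iterate_derivative_sum_C_mul_X_pow_succ_self, eval_C]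
    field_simp
  have htaylor := eval_eq_sum_range_iterate_derivative
    ((natDegree_sum_C_mul_X_pow_succ_le a).trans_lt (lt_add_one _)) u v
  rw [sum_range_succ, sum_range_succ', sum_congr rfl hlower, sum_neg_distrib, htop] at htaylor
  rw [eval_add, eval_add] at heq
  rw [Fin.sum_univ_eq_sum_range (fun i => (derivative^[i + 1] h).eval u * (v - u) ^ (i + 1) /
      (i + 1)!), eq_inv_mul_iff_mul_eq₀ (pow_ne_zero _ (sub_ne_zero.mpr huv.symm))]
  simp only [Function.iterate_zero_apply, pow_zero, factorial_zero, cast_one, div_one,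
    mul_one] at htaylor
  linarith

/-- Explicit formula for the top coefficient: if `p = h + ∑_{m=1}^{j+1} a_m X^m`
satisfies `p^{(l)}(u) = 0` for `1 ≤ l ≤ j` and `p(u) = p(v)` with `u ≠ v`, then
`a_{j+1} = (v-u)^{-(j+1)} (h(u) - h(v) + ∑_{i=1}^j h^{(i)}(u) (v-u)^i / i!)`. -/
theorem stmt8 (j : ℕ) (hj : 1 ≤ j) (h : Polynomial ℝ) (u v : ℝ) (huv : u ≠ v)
    (a : Fin (j + 1) → ℝ)
    (hder : ∀ l : ℕ, 1 ≤ l → l ≤ j →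
      (derivative^[l] (h + ∑ m : Fin (j + 1), C (a m) * X ^ ((m : ℕ) + 1))).eval u = 0)
    (heq : (h + ∑ m : Fin (j + 1), C (a m) * X ^ ((m : ℕ) + 1)).eval u =
      (h + ∑ m : Fin (j + 1), C (a m) * X ^ ((m : ℕ) + 1)).eval v) :
    a (Fin.last j) =
      ((v - u) ^ (j + 1))⁻¹ *
        (h.eval u - h.eval v +
          ∑ i : Fin j,
            (derivative^[(i : ℕ) + 1] h).eval u * (v - u) ^ ((i : ℕ) + 1) /
              Nat.factorial ((i : ℕ) + 1)) :=
  stmt8_general j h u v huv a hder heq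
end

section
/- Let j ≥ 1 be an integer, h ∈ ℝ[X], and u ∈ ℝ. For v ≠ u let S(v) ∈ ℝ^{j+1} denote the unique tuple (a_1,…,a_{j+1}) such that p = h + Σ_{m=1}^{j+1} a_m X^m satisfies p^{(l)}(u) = 0 for 1 ≤ l ≤ j and p(u) = p(v). Then, as v tends to u within ℝ \ {u}, S(v) converges to the unique tuple (a_1,…,a_{j+1}) ∈ ℝ^{j+1} such that p = h + Σ_{m=1}^{j+1} a_m X^m satisfies p^{(l)}(u) = 0 for every 1 ≤ l ≤ j+1. -/
/-!
Write `t_k(p)` for the Taylor coefficients of `p` at `u`. When `t_1(p) = ⋯ = t_j(p) = 0`,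
`p(v) - p(u) = (v - u)^(j+1) Q_p(v - u)` with `Q_p = Σ_{k > j} t_k(p) X^(k-j-1)`, so for `v ≠ u`
the conditions defining `S(v)` say that `t_1(p), …, t_j(p), Q_p(v - u)` vanish. Since
`q_c = Σ c_m X^m` has degree `≤ j + 1`, `Q_{h + q_c} = Q_h + t_{j+1}(q_c)`, hence these conditions
read `T S(v) = b(v - u)` with `T c = (t_1, …, t_{j+1})(q_c)` linear and injective and `b`
continuous, while `T a = b(0)`. An injective linear map on a finite-dimensional space is a closed
embedding, so `S(v) → a`.
-/

open Polynomial Filter Topology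

namespace Polynomial

section CommRing

variable {R : Type*} [CommRing R]

theorem coeff_iterate_divX (p : R[X]) (n k : ℕ) : (divX^[n] p).coeff k = p.coeff (k + n) := by
  induction n generalizing p with
  | zero => rfl
  | succ n ih => rw [Function.iterate_succ_apply, ih, coeff_divX, add_assoc]

theorem iterate_divX_add (p q : R[X]) (n : ℕ) :
    divX^[n] (p + q) = divX^[n] p + divX^[n] q := by
  ext k
  simp only [coeff_iterate_divX, coeff_add]

theorem iterate_divX_eq_C_of_natDegree_le {p : R[X]} {n : ℕ} (hp : p.natDegree ≤ n) :
    divX^[n] p = C (p.coeff n) := by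
  ext k
  rw [coeff_iterate_divX, coeff_C]
  split_ifs with hk
  · rw [hk, zero_add]
  · exact coeff_eq_zero_of_natDegree_lt (by omega)

theorem eval_eq_sum_range_add_pow_mul_iterate_divX (p : R[X]) (n : ℕ) (w : R) :
    p.eval w = ∑ k ∈ Finset.range n, p.coeff k * w ^ k + w ^ n * (divX^[n] p).eval w := by
  induction n with
  | zero => simp
  | succ n ih =>
    have hstep := congrArg (eval w) (divX_mul_X_add (divX^[n] p))
    rw [eval_add, eval_mul, eval_X, eval_C, coeff_iterate_divX, zero_add] at hstep
    rw [ih, ← hstep, Finset.sum_range_succ, Function.iterate_succ_apply']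
    ring

theorem eval_sub_eval_eq_pow_mul_iterate_divX_taylor {p : R[X]} {u : R} {j : ℕ} (v : R)
    (hp : ∀ l, 1 ≤ l → l ≤ j → (taylor u p).coeff l = 0) :
    p.eval v - p.eval u = (v - u) ^ (j + 1) * (divX^[j + 1] (taylor u p)).eval (v - u) := by
  have hexpand := eval_eq_sum_range_add_pow_mul_iterate_divX (taylor u p) (j + 1) (v - u)
  rw [taylor_eval_sub, Finset.sum_range_succ', Finset.sum_eq_zero fun l hl => by
      rw [hp (l + 1) (by omega) (by simp at hl; omega), zero_mul],
    zero_add, pow_zero, mul_one, taylor_coeff_zero] at hexpand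
  rw [hexpand, add_sub_cancel_left]

theorem iterate_derivative_eval_eq_factorial_mul_taylor_coeff (p : R[X]) (k : ℕ) (u : R) :
    (derivative^[k] p).eval u = k.factorial * (taylor u p).coeff k := by
  rw [← factorial_smul_hasseDeriv, taylor_coeff, LinearMap.smul_apply, eval_smul, nsmul_eq_mul]

theorem iterate_derivative_eval_eq_zero_iff [NoZeroDivisors R] [CharZero R]
    (p : R[X]) (k : ℕ) (u : R) :
    (derivative^[k] p).eval u = 0 ↔ (taylor u p).coeff k = 0 := by
  rw [iterate_derivative_eval_eq_factorial_mul_taylor_coeff, mul_eq_zero,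
    or_iff_right (Nat.cast_ne_zero.2 k.factorial_ne_zero)]

noncomputable def monomialSum (n : ℕ) : (Fin n → R) →ₗ[R] R[X] where
  toFun c := ∑ m, C (c m) * X ^ ((m : ℕ) + 1)
  map_add' c d := by simp only [Pi.add_apply, C_add, add_mul, Finset.sum_add_distrib]
  map_smul' r c := by
    simp only [Pi.smul_apply, smul_eq_mul, C_mul, mul_assoc, RingHom.id_apply, Finset.smul_sum,
      smul_eq_C_mul]

theorem monomialSum_apply (n : ℕ) (c : Fin n → R) :
    monomialSum n c = ∑ m, C (c m) * X ^ ((m : ℕ) + 1) := rfl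

theorem natDegree_monomialSum_le (n : ℕ) (c : Fin n → R) : (monomialSum n c).natDegree ≤ n := by
  rw [monomialSum_apply]
  refine natDegree_sum_le_of_forall_le _ _ fun m _ => (natDegree_C_mul_X_pow_le (c m) _).trans ?_
  omega

theorem coeff_monomialSum_succ (n : ℕ) (c : Fin n → R) (m : Fin n) :
    (monomialSum n c).coeff ((m : ℕ) + 1) = c m := by
  simp [monomialSum, coeff_X_pow, Fin.val_inj]

noncomputable def taylorCoeffs (u : R) (n : ℕ) : R[X] →ₗ[R] (Fin n → R) :=
  LinearMap.pi fun l => lcoeff R ((l : ℕ) + 1) ∘ₗ taylor u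

theorem taylorCoeffs_apply (u : R) (n : ℕ) (p : R[X]) (l : Fin n) :
    taylorCoeffs u n p l = (taylor u p).coeff ((l : ℕ) + 1) := rfl

theorem ker_taylorCoeffs_comp_monomialSum (u : R) (n : ℕ) :
    LinearMap.ker (taylorCoeffs u n ∘ₗ monomialSum n) = ⊥ := by
  refine LinearMap.ker_eq_bot'.2 fun c hc => ?_
  ext m
  set q := monomialSum n c
  have htaylor : taylor u q = C (q.eval u) := by
    ext k
    rcases k with _ | k
    · rw [taylor_coeff_zero, coeff_C_zero]
    rw [coeff_C_succ]
    by_cases hk : k < n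
    · exact congrFun hc ⟨k, hk⟩
    · exact coeff_eq_zero_of_natDegree_lt
        ((natDegree_taylor q u).trans_lt ((natDegree_monomialSum_le n c).trans_lt (by omega)))
  have hq : q = C (q.eval u) := taylor_injective u (by rw [htaylor, taylor_C])
  calc c m = q.coeff ((m : ℕ) + 1) := (coeff_monomialSum_succ n c m).symm
    _ = 0 := by rw [hq, coeff_C_succ]

/-- For `v ≠ u`, `conditionVector u (v - u) j p = 0` says that `p^{(l)}(u) = 0` for `1 ≤ l ≤ j` and
`p(u) = p(v)`; `conditionVector u 0 j p = 0` says that `p^{(l)}(u) = 0` for `1 ≤ l ≤ j + 1`. -/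
noncomputable def conditionVector (u w : R) (j : ℕ) (p : R[X]) : Fin (j + 1) → R :=
  Function.update (taylorCoeffs u (j + 1) p) (Fin.last j) ((divX^[j + 1] (taylor u p)).eval w)

theorem conditionVector_zero (u : R) (j : ℕ) (p : R[X]) :
    conditionVector u 0 j p = taylorCoeffs u (j + 1) p := by
  rw [conditionVector, Function.update_eq_self_iff, ← coeff_zero_eq_eval_zero, coeff_iterate_divX,
    zero_add, taylorCoeffs_apply, Fin.val_last]

theorem conditionVector_add_of_natDegree_le (u w : R) (j : ℕ) (p : R[X]) {q : R[X]}
    (hq : q.natDegree ≤ j + 1) :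
    conditionVector u w j (p + q) = conditionVector u w j p + taylorCoeffs u (j + 1) q := by
  have hlast : (divX^[j + 1] (taylor u q)).eval w = taylorCoeffs u (j + 1) q (Fin.last j) := by
    rw [iterate_divX_eq_C_of_natDegree_le ((natDegree_taylor q u).le.trans hq), eval_C,
      taylorCoeffs_apply, Fin.val_last]
  ext l
  rcases eq_or_ne l (Fin.last j) with rfl | hl
  · simp only [conditionVector, map_add, iterate_divX_add, eval_add, Pi.add_apply,
      Function.update_self, hlast]
  · simp only [conditionVector, map_add, Pi.add_apply, Function.update_of_ne hl]

theorem continuous_conditionVector [TopologicalSpace R] [IsTopologicalRing R]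
    (u : R) (j : ℕ) (p : R[X]) : Continuous fun w => conditionVector u w j p :=
  continuous_const.update _ (Polynomial.continuous _)

end CommRing

section Field

variable {K : Type*} [Field K] [CharZero K]

theorem conditionVector_sub_eq_zero {j : ℕ} {p : K[X]} {u v : K}
    (hd : ∀ l : ℕ, 1 ≤ l → l ≤ j → (derivative^[l] p).eval u = 0)
    (he : p.eval u = p.eval v) (hv : v ≠ u) :
    conditionVector u (v - u) j p = 0 := by
  have htaylor : ∀ l, 1 ≤ l → l ≤ j → (taylor u p).coeff l = 0 := fun l h₁ h₂ =>
    (iterate_derivative_eval_eq_zero_iff p l u).1 (hd l h₁ h₂)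
  ext l
  rcases eq_or_ne l (Fin.last j) with rfl | hl
  · have hsum := eval_sub_eval_eq_pow_mul_iterate_divX_taylor v htaylor
    rw [he, sub_self, eq_comm, mul_eq_zero] at hsum
    simpa [conditionVector, sub_eq_zero, hv] using hsum
  · have hl' : (l : ℕ) < j := Fin.val_lt_last hl
    simpa [conditionVector, Function.update_of_ne hl, taylorCoeffs_apply] using
      htaylor ((l : ℕ) + 1) (by omega) (by omega)

theorem taylorCoeffs_eq_zero_of_iterate_derivative_eval_eq_zero {j : ℕ} {p : K[X]} {u : K}
    (hd : ∀ l : ℕ, 1 ≤ l → l ≤ j → (derivative^[l] p).eval u = 0) :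
    taylorCoeffs u j p = 0 := by
  ext l
  exact (iterate_derivative_eval_eq_zero_iff p _ u).1 (hd _ (by omega) l.isLt)

end Field

end Polynomial

open Polynomial

theorem stmt9_general (j : ℕ) (h : Polynomial ℝ) (u : ℝ)
    (S : ℝ → (Fin (j + 1) → ℝ))
    (hS : ∀ v : ℝ, v ≠ u →
      (∀ l : ℕ, 1 ≤ l → l ≤ j →
        (derivative^[l]
          (h + ∑ m : Fin (j + 1), C (S v m) * X ^ ((m : ℕ) + 1))).eval u = 0) ∧
      (h + ∑ m : Fin (j + 1), C (S v m) * X ^ ((m : ℕ) + 1)).eval u =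
        (h + ∑ m : Fin (j + 1), C (S v m) * X ^ ((m : ℕ) + 1)).eval v)
    (a : Fin (j + 1) → ℝ)
    (ha : ∀ l : ℕ, 1 ≤ l → l ≤ j + 1 →
      (derivative^[l] (h + ∑ m : Fin (j + 1), C (a m) * X ^ ((m : ℕ) + 1))).eval u = 0) :
    Filter.Tendsto S (nhdsWithin u {u}ᶜ) (nhds a) := by
  set T := taylorCoeffs u (j + 1) ∘ₗ monomialSum (j + 1)
  have hsplit (w : ℝ) (c : Fin (j + 1) → ℝ) :
      conditionVector u w j (h + monomialSum (j + 1) c) = conditionVector u w j h + T c :=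
    conditionVector_add_of_natDegree_le u w j h (natDegree_monomialSum_le _ c)
  have hTS : ∀ v ≠ u, T (S v) = -conditionVector u (v - u) j h := fun v hv =>
    eq_neg_of_add_eq_zero_right <| by
      rw [← hsplit]; exact conditionVector_sub_eq_zero (hS v hv).1 (hS v hv).2 hv
  have hTa : T a = -conditionVector u (u - u) j h :=
    eq_neg_of_add_eq_zero_right <| by
      rw [← hsplit, sub_self, conditionVector_zero]
      exact taylorCoeffs_eq_zero_of_iterate_derivative_eval_eq_zero ha
  have hlim : Tendsto (fun v => T (S v)) (𝓝[≠] u) (𝓝 (T a)) := by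
    rw [hTa]
    refine Tendsto.congr' (eventually_nhdsWithin_of_forall fun v hv => (hTS v hv).symm) ?_
    exact (((continuous_conditionVector u j h).comp (continuous_sub_right u)).neg.tendsto u
      ).mono_left nhdsWithin_le_nhds
  exact (LinearMap.isClosedEmbedding_of_injective
    (ker_taylorCoeffs_comp_monomialSum u (j + 1))).tendsto_nhds_iff.2 hlim

/-- Let `S(v)`, for `v ≠ u`, be the unique tuple `(a_1,…,a_{j+1})` such that
`p = h + ∑_{m=1}^{j+1} a_m X^m` satisfies `p^{(l)}(u) = 0` for `1 ≤ l ≤ j` and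
`p(u) = p(v)`.  Then as `v → u` within `ℝ \ {u}`, `S(v)` converges to the unique
tuple `a` such that `p = h + ∑_{m=1}^{j+1} a_m X^m` satisfies `p^{(l)}(u) = 0`
for every `1 ≤ l ≤ j+1`. -/
theorem stmt9 (j : ℕ) (hj : 1 ≤ j) (h : Polynomial ℝ) (u : ℝ)
    (S : ℝ → (Fin (j + 1) → ℝ))
    (hS : ∀ v : ℝ, v ≠ u →
      (∀ l : ℕ, 1 ≤ l → l ≤ j →
        (derivative^[l]
          (h + ∑ m : Fin (j + 1), C (S v m) * X ^ ((m : ℕ) + 1))).eval u = 0) ∧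
      (h + ∑ m : Fin (j + 1), C (S v m) * X ^ ((m : ℕ) + 1)).eval u =
        (h + ∑ m : Fin (j + 1), C (S v m) * X ^ ((m : ℕ) + 1)).eval v)
    (a : Fin (j + 1) → ℝ)
    (ha : ∀ l : ℕ, 1 ≤ l → l ≤ j + 1 →
      (derivative^[l] (h + ∑ m : Fin (j + 1), C (a m) * X ^ ((m : ℕ) + 1))).eval u = 0) :
    Filter.Tendsto S (nhdsWithin u {u}ᶜ) (nhds a) :=
  stmt9_general j h u S hS a ha
end

section
/- Let j ≥ 1 and D ≥ 0 be integers. There exists an infinitely differentiable (C^∞) map Φ : ℝ × ℝ × ℝ^{D+1} → ℝ^{j+1} such that, writing h_c = Σ_{m=0}^{D} c_m X^m for c ∈ ℝ^{D+1}: (i) for all u ≠ v and all c, Φ(u, v, c) is the unique tuple (a_1,…,a_{j+1}) for which p = h_c + Σ_{m=1}^{j+1} a_m X^m satisfies p^{(l)}(u) = 0 for every 1 ≤ l ≤ j and p(u) = p(v); and (ii) for all u and all c, Φ(u, u, c) is the unique tuple (a_1,…,a_{j+1}) for which p = h_c + Σ_{m=1}^{j+1} a_m X^m satisfies p^{(l)}(u)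 = 0 for every 1 ≤ l ≤ j+1. -/
open Polynomial

/-- `h_c = ∑_{m=0}^D c_m X^m` for `c ∈ ℝ^{D+1}`. -/
noncomputable def hPoly (D : ℕ) (c : Fin (D + 1) → ℝ) : Polynomial ℝ :=
  ∑ m : Fin (D + 1), C (c m) * X ^ (m : ℕ)

open Finset
noncomputable def Qf (D k : ℕ) (u : ℝ) (c : Fin (D + 1) → ℝ) : ℝ :=
  (Polynomial.hasseDeriv k (derivative (hPoly D c))).eval u

noncomputable def lam (j D : ℕ) (u v : ℝ) (c : Fin (D + 1) → ℝ) : ℝ :=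
  -∑ k ∈ range (D + 1), ((j + 1 : ℝ) / (j + k + 1)) * Qf D (j + k) u c * (v - u) ^ k

noncomputable def Sc (j D k : ℕ) (u v : ℝ) (c : Fin (D + 1) → ℝ) : ℝ :=
  if k < j then -(Qf D k u c) else lam j D u v c

noncomputable def sP (j D : ℕ) (u v : ℝ) (c : Fin (D + 1) → ℝ) : Polynomial ℝ :=
  taylor (-u) (∑ k ∈ range (j + 1), C (Sc j D k u v c) * X ^ k)

noncomputable def Phi (j D : ℕ) (x : ℝ × ℝ × (Fin (D + 1) → ℝ)) : Fin (j + 1) → ℝ :=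
  fun m => (sP j D x.1 x.2.1 x.2.2).coeff m / ((m : ℕ) + 1)

lemma taylor_coeff_Qf (D k : ℕ) (u : ℝ) (c : Fin (D+1) → ℝ) :
    (taylor u (derivative (hPoly D c))).coeff k = Qf D k u c := taylor_coeff u (derivative (hPoly D c)) k

lemma natDegree_sP (j D : ℕ) (u v : ℝ) (c : Fin (D+1) → ℝ) :
    (sP j D u v c).natDegree ≤ j := by
  rw [sP, natDegree_taylor]
  refine natDegree_sum_le_of_forall_le _ _ fun k hk => ?_
  exact (natDegree_C_mul_X_pow_le _ _).trans (Nat.lt_succ_iff.mp (mem_range.mp hk))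

lemma taylor_sP (j D : ℕ) (u v : ℝ) (c : Fin (D+1) → ℝ) :
    taylor u (sP j D u v c) = ∑ k ∈ range (j + 1), C (Sc j D k u v c) * X ^ k := by
  rw [sP, taylor_taylor, add_neg_cancel, taylor_zero]

lemma coeff_sTilde (j D : ℕ) (u v : ℝ) (c : Fin (D+1) → ℝ) (i : ℕ) :
    (∑ k ∈ range (j + 1), C (Sc j D k u v c) * X ^ k).coeff i =
      if i < j + 1 then Sc j D i u v c else 0 := by
  rw [finset_sum_coeff]
  simp only [coeff_C_mul, coeff_X_pow, mul_ite, mul_one, mul_zero]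
  rw [Finset.sum_ite_eq (range (j+1)) i (fun k => Sc j D k u v c)]
  simp [Finset.mem_range]

lemma eval_iter_deriv (Q : Polynomial ℝ) (i : ℕ) (u : ℝ) :
    (derivative^[i] Q).eval u = (Nat.factorial i : ℝ) * (taylor u Q).coeff i := by
  rw [taylor_coeff u Q i, ← Polynomial.factorial_smul_hasseDeriv]
  simp [LinearMap.smul_apply, nsmul_eq_mul]

lemma derivative_taylor (u : ℝ) (P : Polynomial ℝ) :
    derivative (taylor u P) = taylor u (derivative P) := by
  rw [taylor_apply, taylor_apply, derivative_comp]
  simp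

lemma coeff_taylor_succ (u : ℝ) (P : Polynomial ℝ) (i : ℕ) :
    (taylor u P).coeff (i + 1) = (taylor u (derivative P)).coeff i / (i + 1) := by
  rw [← derivative_taylor, coeff_derivative]
  field_simp

lemma sum_coeff_eq_self (f : Polynomial ℝ) (n : ℕ) (h : f.natDegree < n) :
    ∑ m ∈ range n, C (f.coeff m) * X ^ m = f := by
  conv_rhs => rw [f.as_sum_range' n h]
  simp [C_mul_X_pow_eq_monomial]

lemma deriv_corr (j D : ℕ) (u v : ℝ) (c : Fin (D+1) → ℝ) :
    derivative (∑ m : Fin (j + 1), C (Phi j D (u, v, c) m) * X ^ ((m : ℕ) + 1)) =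
      sP j D u v c := by
  rw [derivative_sum]
  have : ∀ m : Fin (j + 1),
      derivative (C (Phi j D (u, v, c) m) * X ^ ((m : ℕ) + 1)) =
        C ((sP j D u v c).coeff m) * X ^ (m : ℕ) := by
    intro m
    rw [derivative_C_mul_X_pow]
    congr 1
    rw [Phi]
    push_cast
    rw [div_mul_cancel₀]
    positivity
  rw [Finset.sum_congr rfl (fun m _ => this m)]
  rw [Fin.sum_univ_eq_sum_range (fun m => C ((sP j D u v c).coeff m) * X ^ m)]
  exact sum_coeff_eq_self _ _ (Nat.lt_succ_of_le (natDegree_sP j D u v c))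

lemma taylor_derivP (j D : ℕ) (u v : ℝ) (c : Fin (D+1) → ℝ) :
    taylor u (derivative (hPoly D c +
        ∑ m : Fin (j + 1), C (Phi j D (u, v, c) m) * X ^ ((m : ℕ) + 1))) =
      taylor u (derivative (hPoly D c)) + ∑ k ∈ range (j + 1), C (Sc j D k u v c) * X ^ k := by
  rw [derivative_add, map_add, deriv_corr, taylor_sP]

lemma coeffP' (j D : ℕ) (u v : ℝ) (c : Fin (D+1) → ℝ) (k : ℕ) :
    (taylor u (derivative (hPoly D c +
        ∑ m : Fin (j + 1), C (Phi j D (u, v, c) m) * X ^ ((m : ℕ) + 1)))).coeff k =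
      Qf D k u c + if k < j + 1 then Sc j D k u v c else 0 := by
  rw [taylor_derivP, coeff_add, taylor_coeff_Qf, coeff_sTilde]

lemma coeffP'_lt (j D : ℕ) (u v : ℝ) (c : Fin (D+1) → ℝ) (k : ℕ) (hk : k < j) :
    (taylor u (derivative (hPoly D c +
        ∑ m : Fin (j + 1), C (Phi j D (u, v, c) m) * X ^ ((m : ℕ) + 1)))).coeff k = 0 := by
  rw [coeffP', if_pos (hk.trans (Nat.lt_succ_self j)), Sc, if_pos hk, add_neg_cancel]

lemma coeffP'_j (j D : ℕ) (u v : ℝ) (c : Fin (D+1) → ℝ) :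
    (taylor u (derivative (hPoly D c +
        ∑ m : Fin (j + 1), C (Phi j D (u, v, c) m) * X ^ ((m : ℕ) + 1)))).coeff j =
      Qf D j u c + lam j D u v c := by
  rw [coeffP', if_pos (Nat.lt_succ_self j), Sc, if_neg (lt_irrefl j)]

lemma coeffP'_gt (j D : ℕ) (u v : ℝ) (c : Fin (D+1) → ℝ) (k : ℕ) (hk : j < k) :
    (taylor u (derivative (hPoly D c +
        ∑ m : Fin (j + 1), C (Phi j D (u, v, c) m) * X ^ ((m : ℕ) + 1)))).coeff k =
      Qf D k u c := by
  rw [coeffP', if_neg (by omega), add_zero]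

lemma lam_diag (j D : ℕ) (u : ℝ) (c : Fin (D+1) → ℝ) :
    lam j D u u c = -(Qf D j u c) := by
  rw [lam]
  congr 1
  rw [Finset.sum_eq_single_of_mem 0 (Finset.mem_range.mpr (Nat.succ_pos D))]
  · simp [div_self (by positivity : (j + 1 : ℝ) ≠ 0)]
  · intro k _ hk
    simp [zero_pow hk, sub_self]

lemma deriv_vanish_aux (j D : ℕ) (u v : ℝ) (c : Fin (D+1) → ℝ) (l : ℕ) (h1 : 1 ≤ l)
    (h : (taylor u (derivative (hPoly D c +
        ∑ m : Fin (j + 1), C (Phi j D (u, v, c) m) * X ^ ((m : ℕ) + 1)))).coeff (l - 1) = 0) :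
    (derivative^[l] (hPoly D c +
        ∑ m : Fin (j + 1), C (Phi j D (u, v, c) m) * X ^ ((m : ℕ) + 1))).eval u = 0 := by
  obtain ⟨i, rfl⟩ : ∃ i, l = i + 1 := ⟨l - 1, by omega⟩
  rw [Function.iterate_succ_apply, eval_iter_deriv]
  have h' : (taylor u (derivative (hPoly D c +
      ∑ m : Fin (j + 1), C (Phi j D (u, v, c) m) * X ^ ((m : ℕ) + 1)))).coeff i = 0 := h
  rw [h', mul_zero]

lemma deriv_vanish (j D : ℕ) (u v : ℝ) (c : Fin (D+1) → ℝ) (l : ℕ) (h1 : 1 ≤ l) (h2 : l ≤ j) :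
    (derivative^[l] (hPoly D c +
        ∑ m : Fin (j + 1), C (Phi j D (u, v, c) m) * X ^ ((m : ℕ) + 1))).eval u = 0 :=
  deriv_vanish_aux j D u v c l h1 (coeffP'_lt j D u v c _ (by omega))

lemma deriv_vanish_diag (j D : ℕ) (u : ℝ) (c : Fin (D+1) → ℝ) (l : ℕ) (h1 : 1 ≤ l)
    (h2 : l ≤ j + 1) :
    (derivative^[l] (hPoly D c +
        ∑ m : Fin (j + 1), C (Phi j D (u, u, c) m) * X ^ ((m : ℕ) + 1))).eval u = 0 := by
  refine deriv_vanish_aux j D u u c l h1 ?_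
  rcases Nat.lt_or_ge (l - 1) j with h | h
  · exact coeffP'_lt j D u u c _ h
  · have : l - 1 = j := by omega
    rw [this, coeffP'_j, lam_diag, add_neg_cancel]

lemma natDegree_hPoly (D : ℕ) (c : Fin (D+1) → ℝ) : (hPoly D c).natDegree ≤ D := by
  refine natDegree_sum_le_of_forall_le _ _ fun i _ => ?_
  exact (natDegree_C_mul_X_pow_le _ _).trans (Nat.lt_succ_iff.mp i.isLt)

lemma natDegree_P (j D : ℕ) (u v : ℝ) (c : Fin (D+1) → ℝ) :
    (hPoly D c +
        ∑ m : Fin (j + 1), C (Phi j D (u, v, c) m) * X ^ ((m : ℕ) + 1)).natDegree ≤ D + j + 1 := by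
  refine (natDegree_add_le _ _).trans (max_le ((natDegree_hPoly D c).trans (by omega)) ?_)
  refine natDegree_sum_le_of_forall_le _ _ fun m _ => ?_
  exact (natDegree_C_mul_X_pow_le _ _).trans (by omega)

lemma eval_eq (j D : ℕ) (u v : ℝ) (c : Fin (D+1) → ℝ) :
    (hPoly D c + ∑ m : Fin (j + 1), C (Phi j D (u, v, c) m) * X ^ ((m : ℕ) + 1)).eval u =
      (hPoly D c + ∑ m : Fin (j + 1), C (Phi j D (u, v, c) m) * X ^ ((m : ℕ) + 1)).eval v := by
  set P := hPoly D c + ∑ m : Fin (j + 1), C (Phi j D (u, v, c) m) * X ^ ((m : ℕ) + 1) with hP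
  have hdeg : (taylor u P).natDegree < D + j + 2 := by
    rw [natDegree_taylor]; have := natDegree_P j D u v c; rw [← hP] at this; omega
  rw [← taylor_eval_sub u P u, ← taylor_eval_sub u P v, sub_self, ← coeff_zero_eq_eval_zero,
    eval_eq_sum_range' hdeg]
  rw [show D + j + 2 = (D + j + 1) + 1 by omega, Finset.sum_range_succ']
  simp only [pow_zero, mul_one]
  rw [right_eq_add]
  have hterm : ∀ i : ℕ, (taylor u P).coeff (i + 1) * (v - u) ^ (i + 1) =
      (taylor u (derivative P)).coeff i / ((i : ℝ) + 1) * (v - u) ^ (i + 1) := by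
    intro i; rw [coeff_taylor_succ]
  rw [Finset.sum_congr rfl (fun i _ => hterm i)]
  rw [show D + j + 1 = j + (D + 1) by omega, Finset.sum_range_add]
  have h1 : ∑ i ∈ range j, (taylor u (derivative P)).coeff i / ((i : ℝ) + 1) * (v - u) ^ (i + 1)
      = 0 := by
    refine Finset.sum_eq_zero fun i hi => ?_
    rw [hP, coeffP'_lt j D u v c i (Finset.mem_range.mp hi), zero_div, zero_mul]
  rw [h1, zero_add]
  have h2 : ∀ k ∈ range (D + 1),
      (taylor u (derivative P)).coeff (j + k) / ((j + k : ℕ) + 1 : ℝ) * (v - u) ^ (j + k + 1) =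
      Qf D (j + k) u c / ((j : ℝ) + k + 1) * ((v - u) ^ k * (v - u) ^ (j + 1))
        + (if k = 0 then lam j D u v c / ((j : ℝ) + 1) * (v - u) ^ (j + 1) else 0) := by
    intro k _
    have hpow : (v - u) ^ (j + k + 1) = (v - u) ^ k * (v - u) ^ (j + 1) := by
      rw [← pow_add]; congr 1; omega
    rcases Nat.eq_zero_or_pos k with rfl | hk
    · rw [hP, coeffP', if_pos (by omega), Sc, if_neg (by omega), if_pos rfl, hpow]
      push_cast
      ring
    · rw [hP, coeffP'_gt j D u v c _ (by omega), if_neg (by omega), hpow, add_zero]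
      push_cast
      ring
  rw [Finset.sum_congr rfl h2, Finset.sum_add_distrib]
  rw [Finset.sum_ite_eq' (range (D + 1)) 0
    (fun _ => lam j D u v c / ((j : ℝ) + 1) * (v - u) ^ (j + 1)),
    if_pos (Finset.mem_range.mpr (Nat.succ_pos D))]
  rw [lam]
  rw [neg_div, neg_mul, Finset.sum_div, Finset.sum_mul, ← sub_eq_add_neg, sub_eq_zero]
  refine Finset.sum_congr rfl fun k _ => ?_
  have hj1 : ((j : ℝ) + 1) ≠ 0 := by positivity
  have hjk1 : ((j : ℝ) + k + 1) ≠ 0 := by positivity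
  field_simp

lemma sub_corr (j D : ℕ) (c : Fin (D+1) → ℝ) (a b : Fin (j+1) → ℝ) :
    (hPoly D c + ∑ m : Fin (j + 1), C (a m) * X ^ ((m : ℕ) + 1)) -
      (hPoly D c + ∑ m : Fin (j + 1), C (b m) * X ^ ((m : ℕ) + 1)) =
      ∑ m : Fin (j + 1), C (a m - b m) * X ^ ((m : ℕ) + 1) := by
  rw [add_sub_add_left_eq_sub, ← Finset.sum_sub_distrib]
  exact Finset.sum_congr rfl fun m _ => by rw [← sub_mul, ← C_sub]

lemma coeff_corr (j : ℕ) (e : Fin (j+1) → ℝ) (m : Fin (j+1)) :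
    (∑ i : Fin (j + 1), C (e i) * X ^ ((i : ℕ) + 1)).coeff ((m : ℕ) + 1) = e m := by
  rw [finset_sum_coeff]
  simp only [coeff_C_mul, coeff_X_pow, mul_ite, mul_one, mul_zero]
  rw [Finset.sum_eq_single m]
  · rw [if_pos rfl]
  · intro i _ hi
    rw [if_neg]
    intro h
    exact hi (Fin.ext (by omega))
  · intro h
    exact absurd (Finset.mem_univ m) h

lemma corr_coeff_zero (j : ℕ) (e : Fin (j+1) → ℝ) :
    (∑ i : Fin (j + 1), C (e i) * X ^ ((i : ℕ) + 1)).coeff 0 = 0 := by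
  rw [finset_sum_coeff]
  refine Finset.sum_eq_zero fun i _ => ?_
  simp [coeff_C_mul, coeff_X_pow]

lemma poly_vanish (j : ℕ) (u : ℝ) (d : Polynomial ℝ) (hdeg : d.natDegree ≤ j + 1)
    (h0 : d.coeff 0 = 0)
    (hmid : ∀ l, 1 ≤ l → l ≤ j → (taylor u d).coeff l = 0)
    (htop : (taylor u d).coeff (j + 1) = 0) : d = 0 := by
  have hT : taylor u d = C ((taylor u d).coeff 0) := by
    ext i
    match i with
    | 0 => simp
    | (i + 1) =>
      rw [coeff_C, if_neg (Nat.succ_ne_zero i)]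
      rcases Nat.lt_or_ge (i + 1) (j + 1) with h | h
      · exact hmid (i + 1) (by omega) (by omega)
      · rcases Nat.eq_or_lt_of_le h with h' | h'
        · rw [← h']; exact htop
        · exact coeff_eq_zero_of_natDegree_lt (by rw [natDegree_taylor]; omega)
  have hd : d = C ((taylor u d).coeff 0) := by
    have h2 := congrArg (taylor (-u)) hT
    rwa [taylor_taylor, neg_add_cancel, taylor_zero, taylor_C] at h2
  rw [hd] at h0 ⊢
  rw [coeff_C, if_pos rfl] at h0
  rw [h0, map_zero]

lemma coeff_zero_of_deriv (Q : Polynomial ℝ) (l : ℕ) (u : ℝ)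
    (h : (derivative^[l] Q).eval u = 0) : (taylor u Q).coeff l = 0 := by
  have h2 := eval_iter_deriv Q l u
  rw [h] at h2
  have hf : (Nat.factorial l : ℝ) ≠ 0 := Nat.cast_ne_zero.mpr (Nat.factorial_ne_zero l)
  exact (mul_eq_zero.mp h2.symm).resolve_left hf

lemma top_coeff_zero (j : ℕ) (u v : ℝ) (huv : u ≠ v) (d : Polynomial ℝ)
    (hdeg : d.natDegree ≤ j + 1)
    (hmid : ∀ l, 1 ≤ l → l ≤ j → (taylor u d).coeff l = 0)
    (heval : d.eval u = d.eval v) : (taylor u d).coeff (j + 1) = 0 := by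
  have hdeg2 : (taylor u d).natDegree < j + 2 := by rw [natDegree_taylor]; omega
  rw [← taylor_eval_sub u d u, ← taylor_eval_sub u d v, sub_self, ← coeff_zero_eq_eval_zero,
    eval_eq_sum_range' hdeg2] at heval
  rw [show j + 2 = (j + 1) + 1 by omega, Finset.sum_range_succ'] at heval
  simp only [pow_zero, mul_one] at heval
  rw [right_eq_add, Finset.sum_range_succ] at heval
  have hz : ∑ i ∈ range j, (taylor u d).coeff (i + 1) * (v - u) ^ (i + 1) = 0 :=
    Finset.sum_eq_zero fun i hi => by rw [hmid (i + 1) (by omega)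
      (by have := Finset.mem_range.mp hi; omega), zero_mul]
  rw [hz, zero_add] at heval
  have ht : (v - u) ^ (j + 1) ≠ 0 := pow_ne_zero _ (sub_ne_zero.mpr (Ne.symm huv))
  exact (mul_eq_zero.mp heval).resolve_right ht

lemma funs_eq (j : ℕ) (u : ℝ) (a b : Fin (j+1) → ℝ)
    (hmid : ∀ l, 1 ≤ l → l ≤ j →
      (taylor u (∑ i : Fin (j + 1), C (a i - b i) * X ^ ((i : ℕ) + 1))).coeff l = 0)
    (htop : (taylor u (∑ i : Fin (j + 1), C (a i - b i) * X ^ ((i : ℕ) + 1))).coeff (j + 1) = 0) :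
    a = b := by
  have hdeg : (∑ i : Fin (j + 1), C (a i - b i) * X ^ ((i : ℕ) + 1)).natDegree ≤ j + 1 :=
    natDegree_sum_le_of_forall_le _ _ fun i _ =>
      (natDegree_C_mul_X_pow_le _ _).trans (by omega)
  have hzero := poly_vanish j u _ hdeg (corr_coeff_zero j _) hmid htop
  funext m
  have h2 := congrArg (fun p : Polynomial ℝ => p.coeff ((m : ℕ) + 1)) hzero
  simp only [coeff_corr, coeff_zero] at h2
  exact sub_eq_zero.mp h2

lemma contDiff_polyeval (p : Polynomial ℝ) : ContDiff ℝ (⊤ : ℕ∞) fun t : ℝ => p.eval t := by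
  induction p using Polynomial.induction_on' with
  | add p q hp hq => simp only [eval_add]; exact hp.add hq
  | monomial n a =>
      simp only [eval_monomial]
      exact contDiff_const.mul (contDiff_id.pow n)

lemma Qf_eq (D k : ℕ) (u : ℝ) (c : Fin (D+1) → ℝ) :
    Qf D k u c =
      ∑ i : Fin (D + 1), c i * (hasseDeriv k (derivative (X ^ (i : ℕ) : Polynomial ℝ))).eval u := by
  rw [Qf, hPoly]
  have : ∀ i : Fin (D + 1), C (c i) * X ^ (i : ℕ) = c i • (X ^ (i : ℕ) : Polynomial ℝ) := by
    intro i; rw [smul_eq_C_mul]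
  rw [Finset.sum_congr rfl fun i _ => this i, map_sum, map_sum, eval_finset_sum]
  refine Finset.sum_congr rfl fun i _ => ?_
  rw [map_smul, map_smul, eval_smul, smul_eq_mul]

lemma contDiff_Qf (D k : ℕ) :
    ContDiff ℝ (⊤ : ℕ∞) (fun x : ℝ × ℝ × (Fin (D + 1) → ℝ) => Qf D k x.1 x.2.2) := by
  have h : (fun x : ℝ × ℝ × (Fin (D + 1) → ℝ) => Qf D k x.1 x.2.2) =
      fun x => ∑ i : Fin (D + 1),
        x.2.2 i * (hasseDeriv k (derivative (X ^ (i : ℕ) : Polynomial ℝ))).eval x.1 :=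
    funext fun x => Qf_eq D k x.1 x.2.2
  rw [h]
  refine ContDiff.sum fun i _ => ContDiff.mul ?_ ?_
  · exact contDiff_pi.mp (contDiff_snd.comp contDiff_snd) i
  · exact (contDiff_polyeval _).comp contDiff_fst

lemma contDiff_lam (j D : ℕ) :
    ContDiff ℝ (⊤ : ℕ∞) (fun x : ℝ × ℝ × (Fin (D + 1) → ℝ) => lam j D x.1 x.2.1 x.2.2) := by
  simp only [lam]
  refine ContDiff.neg (ContDiff.sum fun k _ => ?_)
  exact (contDiff_const.mul (contDiff_Qf D (j + k))).mul
    (((contDiff_fst.comp contDiff_snd).sub contDiff_fst).pow k)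

lemma sP_coeff (j D : ℕ) (u v : ℝ) (c : Fin (D+1) → ℝ) (m : ℕ) :
    (sP j D u v c).coeff m =
      ∑ k ∈ range (j + 1), Sc j D k u v c * ((-u) ^ (k - m) * (k.choose m : ℝ)) := by
  rw [sP, taylor_apply]
  have hcomp : ((∑ k ∈ range (j + 1), C (Sc j D k u v c) * X ^ k).comp (X + C (-u))) =
      ∑ k ∈ range (j + 1), C (Sc j D k u v c) * (X + C (-u)) ^ k := by
    simp [Polynomial.comp, eval₂_finset_sum, eval₂_mul, eval₂_C, eval₂_X_pow]
  rw [hcomp, finset_sum_coeff]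
  refine Finset.sum_congr rfl fun k _ => ?_
  rw [coeff_C_mul, coeff_X_add_C_pow]

lemma contDiff_Phi (j D : ℕ) : ContDiff ℝ (⊤ : ℕ∞) (Phi j D) := by
  refine contDiff_pi.mpr fun m => ?_
  have h : (fun x : ℝ × ℝ × (Fin (D + 1) → ℝ) => Phi j D x m) =
      fun x => (∑ k ∈ range (j + 1),
        Sc j D k x.1 x.2.1 x.2.2 * ((-x.1) ^ (k - (m : ℕ)) * (k.choose m : ℝ))) / ((m : ℕ) + 1) :=
    funext fun x => by rw [Phi, sP_coeff]
  rw [h]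
  refine ContDiff.div_const (ContDiff.sum fun k _ => ContDiff.mul ?_ ?_) _
  · simp only [Sc]
    split_ifs
    · exact (contDiff_Qf D k).neg
    · exact contDiff_lam j D
  · exact (contDiff_fst.neg.pow _).mul contDiff_const

/-- There is a `C^∞` map `Φ : ℝ × ℝ × ℝ^{D+1} → ℝ^{j+1}` such that
(i) for `u ≠ v`, `Φ(u,v,c)` is the unique tuple `(a_1,…,a_{j+1})` with
`p = h_c + ∑ a_m X^m` satisfying `p^{(l)}(u) = 0` for `1 ≤ l ≤ j` and `p(u) = p(v)`;
(ii) `Φ(u,u,c)` is the unique tuple with `p^{(l)}(u) = 0` for `1 ≤ l ≤ j+1`. -/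
theorem stmt10 (j D : ℕ) (hj : 1 ≤ j) :
    ∃ Φ : ℝ × ℝ × (Fin (D + 1) → ℝ) → (Fin (j + 1) → ℝ),
      ContDiff ℝ (⊤ : ℕ∞) Φ ∧
      (∀ (u v : ℝ) (c : Fin (D + 1) → ℝ), u ≠ v →
        ((∀ l : ℕ, 1 ≤ l → l ≤ j →
            (derivative^[l] (hPoly D c +
              ∑ m : Fin (j + 1), C (Φ (u, v, c) m) * X ^ ((m : ℕ) + 1))).eval u = 0) ∧
          (hPoly D c + ∑ m : Fin (j + 1), C (Φ (u, v, c) m) * X ^ ((m : ℕ) + 1)).eval u =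
            (hPoly D c + ∑ m : Fin (j + 1), C (Φ (u, v, c) m) * X ^ ((m : ℕ) + 1)).eval v) ∧
        (∀ a : Fin (j + 1) → ℝ,
          ((∀ l : ℕ, 1 ≤ l → l ≤ j →
              (derivative^[l] (hPoly D c +
                ∑ m : Fin (j + 1), C (a m) * X ^ ((m : ℕ) + 1))).eval u = 0) ∧
            (hPoly D c + ∑ m : Fin (j + 1), C (a m) * X ^ ((m : ℕ) + 1)).eval u =
              (hPoly D c + ∑ m : Fin (j + 1), C (a m) * X ^ ((m : ℕ) + 1)).eval v) →
          a = Φ (u, v, c))) ∧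
      (∀ (u : ℝ) (c : Fin (D + 1) → ℝ),
        (∀ l : ℕ, 1 ≤ l → l ≤ j + 1 →
          (derivative^[l] (hPoly D c +
            ∑ m : Fin (j + 1), C (Φ (u, u, c) m) * X ^ ((m : ℕ) + 1))).eval u = 0) ∧
        (∀ a : Fin (j + 1) → ℝ,
          (∀ l : ℕ, 1 ≤ l → l ≤ j + 1 →
            (derivative^[l] (hPoly D c +
              ∑ m : Fin (j + 1), C (a m) * X ^ ((m : ℕ) + 1))).eval u = 0) →
          a = Φ (u, u, c))) := by
  refine ⟨Phi j D, contDiff_Phi j D, ?_, ?_⟩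
  · intro u v c huv
    refine ⟨⟨fun l h1 h2 => deriv_vanish j D u v c l h1 h2, eval_eq j D u v c⟩, ?_⟩
    rintro a ⟨ha1, ha2⟩
    have hmid : ∀ l, 1 ≤ l → l ≤ j →
        (taylor u (∑ i : Fin (j + 1),
          C (a i - Phi j D (u, v, c) i) * X ^ ((i : ℕ) + 1))).coeff l = 0 := by
      intro l h1 h2
      rw [← sub_corr j D c a (Phi j D (u, v, c)), map_sub, coeff_sub,
        coeff_zero_of_deriv _ l u (ha1 l h1 h2),
        coeff_zero_of_deriv _ l u (deriv_vanish j D u v c l h1 h2), sub_self]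
    refine funs_eq j u a (Phi j D (u, v, c)) hmid ?_
    refine top_coeff_zero j u v huv _ (natDegree_sum_le_of_forall_le _ _ fun i _ =>
      (natDegree_C_mul_X_pow_le _ _).trans (by omega)) hmid ?_
    rw [← sub_corr j D c a (Phi j D (u, v, c)), eval_sub, eval_sub, ha2, eval_eq j D u v c]
  · intro u c
    refine ⟨fun l h1 h2 => deriv_vanish_diag j D u c l h1 h2, ?_⟩
    intro a ha
    have hmid : ∀ l, 1 ≤ l → l ≤ j + 1 →
        (taylor u (∑ i : Fin (j + 1),
          C (a i - Phi j D (u, u, c) i) * X ^ ((i : ℕ) + 1))).coeff l = 0 := by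
      intro l h1 h2
      rw [← sub_corr j D c a (Phi j D (u, u, c)), map_sub, coeff_sub,
        coeff_zero_of_deriv _ l u (ha l h1 h2),
        coeff_zero_of_deriv _ l u (deriv_vanish_diag j D u c l h1 h2), sub_self]
    exact funs_eq j u a (Phi j D (u, u, c)) (fun l h1 h2 => hmid l h1 (by omega))
      (hmid (j + 1) (by omega) le_rfl)
end

section
/- Let r ≥ 1 be an integer and let p ∈ ℝ[X] be a monic polynomial of degree r+1 whose coefficient of X^r equals 0. If p^{(l)}(a) = 0 for every 1 ≤ l ≤ r−1, then p(x) = p(a) + (x + r·a)·(x − a)^r for all real x (equivalently, as polynomials, p = C(p(a)) + (X + C(r·a))·(X − C(a))^r, where C denotes the constant polynomial). -/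
open Polynomial Nat

/-!
In the basis `(X - a)^i` the coefficient of `p` is `p^{(i)}(a) / i!`. So the hypotheses kill the
coefficients of index `1, …, r - 1`, monicity makes the top one `1`, and since the shift
`X ↦ X + a` turns `X^{r+1} + 0·X^r + …` into `X^{r+1} + (r+1)a·X^r + …`, the coefficient of
index `r` is `(r + 1)a`. Expanding the right-hand side in the same basis gives the same four terms.
-/

namespace Polynomial

variable {R : Type*}

theorem eval_iterate_derivative_eq_factorial_mul_taylor_coeff [CommSemiring R] (f : R[X])
    (a : R) (k : ℕ) : (derivative^[k] f).eval a = k ! * (taylor a f).coeff k := by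
  rw [taylor_coeff, ← factorial_smul_hasseDeriv, LinearMap.smul_apply, eval_smul, nsmul_eq_mul]

theorem taylor_coeff_eq_zero_of_eval_iterate_derivative_eq_zero [CommSemiring R]
    [NoZeroDivisors R] [CharZero R] {f : R[X]} {a : R} {k : ℕ}
    (h : (derivative^[k] f).eval a = 0) : (taylor a f).coeff k = 0 := by
  rw [eval_iterate_derivative_eq_factorial_mul_taylor_coeff] at h
  exact (mul_eq_zero.1 h).resolve_left (by exact_mod_cast k.factorial_ne_zero)

theorem taylor_coeff_of_natDegree_le_succ [CommSemiring R] {f : R[X]} {n : ℕ}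
    (hf : f.natDegree ≤ n + 1) (a : R) :
    (taylor a f).coeff n = f.coeff n + (n + 1) * f.coeff (n + 1) * a := by
  have hdeg : (hasseDeriv n f).natDegree < 2 := by
    have := natDegree_hasseDeriv_le f n
    omega
  rw [taylor_coeff, eval_eq_sum_range' hdeg]
  simp only [Finset.sum_range_succ, Finset.sum_range_zero, hasseDeriv_coeff, zero_add,
    Nat.choose_self, pow_zero, pow_one, Nat.add_comm 1 n, Nat.choose_succ_self_right]
  push_cast
  ring

theorem eq_C_add_C_mul_X_pow_add_C_mul_X_pow_succ [Semiring R] {q : R[X]} {r : ℕ} (hr : 1 ≤ r)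
    (hq : q.natDegree ≤ r + 1) (hmid : ∀ i, 1 ≤ i → i < r → q.coeff i = 0) :
    q = C (q.coeff 0) + C (q.coeff r) * X ^ r + C (q.coeff (r + 1)) * X ^ (r + 1) := by
  ext n
  simp only [coeff_add, coeff_C, coeff_C_mul_X_pow]
  rcases Nat.lt_or_ge (r + 1) n with hn | hn
  · rw [coeff_eq_zero_of_natDegree_lt (by omega)]
    simp [show n ≠ 0 by omega, show n ≠ r by omega, show n ≠ r + 1 by omega]
  · obtain rfl | hpos := Nat.eq_zero_or_pos n
    · simp [show 0 ≠ r by omega]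
    obtain hlt | heq | heq : n < r ∨ n = r ∨ n = r + 1 := by omega
    · simp [hmid n hpos hlt, hpos.ne', hlt.ne, show n ≠ r + 1 by omega]
    · simp [heq, show r ≠ 0 by omega]
    · simp [heq]

end Polynomial

/-- If `p ∈ ℝ[X]` is monic of degree `r+1` with vanishing coefficient of `X^r`,
and `p^{(l)}(a) = 0` for every `1 ≤ l ≤ r-1`, then
`p = p(a) + (X + r·a)·(X − a)^r`. -/
theorem stmt12 (r : ℕ) (hr : 1 ≤ r) (p : Polynomial ℝ)
    (hmonic : p.Monic) (hdeg : p.natDegree = r + 1) (hcoeff : p.coeff r = 0)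
    (a : ℝ)
    (hder : ∀ l : ℕ, 1 ≤ l → l ≤ r - 1 → (derivative^[l] p).eval a = 0) :
    p = C (p.eval a) + (X + C ((r : ℝ) * a)) * (X - C a) ^ r := by
  have hlead : p.coeff (r + 1) = 1 := hdeg ▸ hmonic.coeff_natDegree
  have htop : (taylor a p).coeff (r + 1) = 1 := by
    rw [← hdeg, coeff_taylor_natDegree, hmonic.leadingCoeff]
  have hsub : (taylor a p).coeff r = (r + 1) * a := by
    rw [taylor_coeff_of_natDegree_le_succ hdeg.le, hcoeff, hlead, zero_add, mul_one]
  have hmid : ∀ i, 1 ≤ i → i < r → (taylor a p).coeff i = 0 := fun i h1 h2 =>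
    taylor_coeff_eq_zero_of_eval_iterate_derivative_eq_zero (hder i h1 (by omega))
  have htaylor := eq_C_add_C_mul_X_pow_add_C_mul_X_pow_succ hr
    (by rw [natDegree_taylor, hdeg]) hmid
  rw [taylor_coeff_zero, hsub, htop] at htaylor
  apply taylor_injective a
  rw [htaylor]
  simp only [taylor_mul, taylor_pow, map_add, map_sub, taylor_C, taylor_X]
  simp only [map_mul, map_add, map_natCast, map_one]
  ring
end

section
/- Let r ≥ 1 be an integer and let p ∈ ℝ[X] be a monic polynomial of degree r+1 whose coefficient of X^r equals 0. Suppose p^{(l)}(a) = 0 for every 1 ≤ l ≤ r−1, and suppose p(a) = p(b) for some real b ≠ a. Then b = −r·a (equivalently a = −b/r). -/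
/-!
Shift to `q(x) = p(x + a)`. Its coefficients are `p^{(l)}(a) / l!`, so `q` has no terms in
degrees `1, …, r - 1`, while its `X^r` coefficient is `(r + 1) a` because `p` has none. Hence
`p(b) - p(a) = q(b - a) - q(0) = (b - a)^r (b - a + (r + 1) a)`, which for `b ≠ a` forces `b = -r a`.
-/

open Polynomial

namespace Polynomial

variable {R : Type*} [CommSemiring R]

theorem iterate_derivative_eval_eq_factorial_mul_coeff_taylor (f : R[X]) (l : ℕ) (r : R) :
    (derivative^[l] f).eval r = l.factorial * (taylor r f).coeff l := by
  rw [taylor_coeff, ← factorial_smul_hasseDeriv, LinearMap.smul_apply, eval_smul, nsmul_eq_mul]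

theorem coeff_taylor_of_natDegree_le_succ {f : R[X]} {n : ℕ} (hf : f.natDegree ≤ n + 1) (r : R) :
    (taylor r f).coeff n = f.coeff n + (n + 1) * f.coeff (n + 1) * r := by
  have hlt : (hasseDeriv n f).natDegree < 2 := by
    have := natDegree_hasseDeriv_le f n
    omega
  rw [taylor_coeff, eval_eq_sum_range' hlt]
  simp [Finset.sum_range_succ, hasseDeriv_coeff, add_comm 1 n, Nat.choose_succ_self_right]

theorem eval_eq_coeff_zero_add_pow_mul {q : R[X]} {n : ℕ} (hn : 1 ≤ n) (hq : q.natDegree ≤ n + 1)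
    (hgap : ∀ l, 0 < l → l < n → q.coeff l = 0) (t : R) :
    q.eval t = q.coeff 0 + t ^ n * (q.coeff n + q.coeff (n + 1) * t) := by
  obtain ⟨m, rfl⟩ := Nat.exists_eq_add_of_le' hn
  rw [eval_eq_sum_range' (n := m + 1 + 1 + 1) (by omega), Finset.sum_range_succ,
    Finset.sum_range_succ, Finset.sum_range_succ', Finset.sum_eq_zero fun i hi => by
      rw [hgap (i + 1) (by omega) (by simp at hi; omega), zero_mul]]
  ring

end Polynomial

/-- If `p ∈ ℝ[X]` is monic of degree `r+1` with vanishing coefficient of `X^r`,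
`p^{(l)}(a) = 0` for every `1 ≤ l ≤ r-1` and `p(a) = p(b)` for some `b ≠ a`,
then `b = -r·a`. -/
theorem stmt13 (r : ℕ) (hr : 1 ≤ r) (p : Polynomial ℝ)
    (hmonic : p.Monic) (hdeg : p.natDegree = r + 1) (hcoeff : p.coeff r = 0)
    (a b : ℝ) (hba : b ≠ a)
    (hder : ∀ l : ℕ, 1 ≤ l → l ≤ r - 1 → (derivative^[l] p).eval a = 0)
    (heq : p.eval a = p.eval b) :
    b = -(r : ℝ) * a := by
  set q := taylor a p
  have hgap : ∀ l, 0 < l → l < r → q.coeff l = 0 := fun l hl hlr => by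
    have := hder l hl (by omega)
    rw [iterate_derivative_eval_eq_factorial_mul_coeff_taylor] at this
    exact (mul_eq_zero.mp this).resolve_left (mod_cast l.factorial_ne_zero)
  have hlead : p.coeff (r + 1) = 1 := hdeg ▸ hmonic.coeff_natDegree
  have hsub : q.coeff r = (r + 1) * a := by
    rw [coeff_taylor_of_natDegree_le_succ hdeg.le, hcoeff, hlead]
    ring
  have htop : q.coeff (r + 1) = 1 := by
    rw [← hdeg, coeff_taylor_natDegree, hmonic.leadingCoeff]
  have hfactor : (b - a) ^ r * ((r + 1) * a + (b - a)) = 0 := by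
    have := eval_eq_coeff_zero_add_pow_mul hr (natDegree_taylor p a ▸ hdeg.le) hgap (b - a)
    rw [taylor_eval, sub_add_cancel, taylor_coeff_zero, hsub, htop, one_mul, ← heq] at this
    linarith
  have := (mul_eq_zero.mp hfactor).resolve_left (pow_ne_zero r (sub_ne_zero.mpr hba))
  linarith
end

section
/- Let r ≥ 1 be an integer. For every real number b > 0 there exist a unique real number a with a ≠ b and a unique tuple (λ_1,…,λ_{r−1}) ∈ ℝ^{r−1} such that the polynomial p = X^{r+1} + Σ_{m=1}^{r−1} λ_m X^m satisfies p^{(l)}(a) = 0 for every 1 ≤ l ≤ r−1 and p(a) = p(b); moreover this unique a equals −b/r. -/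
/-!
A polynomial that is monic of degree `r + 1` with no `X ^ r` and no constant term is determined
by the values of its derivatives of orders `1, …, r - 1` at a single point `a`: the difference of
two such polynomials has degree `< r`, so if these derivatives agree it is constant, and the
constant term forces it to vanish. The polynomial `(X - a) ^ r * (X + r a) - c`, with `c` chosen
to kill the constant term, is of this shape and has the required flatness at `a`. Hence `p` is
this polynomial, and `p(b) = p(a)` reads `(b - a) ^ r * (b + r a) = 0`, i.e. `a = -b / r`.
-/

open Polynomial

theorem Polynomial.eq_C_eval_of_iterate_derivative_eval_eq_zero {R : Type*} [CommRing R]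
    [IsDomain R] [CharZero R] {p : R[X]} {a : R} {n : ℕ} (hp : p.natDegree ≤ n)
    (h : ∀ l, 1 ≤ l → l ≤ n → (derivative^[l] p).eval a = 0) : p = C (p.eval a) := by
  by_contra hne
  set q := p - C (p.eval a)
  have hq : q ≠ 0 := sub_ne_zero.2 hne
  have hroots : ∀ m ≤ n, (derivative^[m] q).IsRoot a := by
    rintro (_ | m) hm
    · simp [q]
    · simpa [q, iterate_derivative_sub, iterate_derivative_C] using h (m + 1) (by omega) hm
  have hdvd : (X - C a) ^ (n + 1) ∣ q :=
    (pow_dvd_pow _ (lt_rootMultiplicity_of_isRoot_iterate_derivative hq hroots)).trans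
      (pow_rootMultiplicity_dvd q a)
  have hlow := natDegree_le_of_dvd hdvd hq
  have hhigh : q.natDegree ≤ n := (natDegree_sub_le _ _).trans (by simpa using hp)
  rw [natDegree_pow, natDegree_X_sub_C] at hlow
  omega

section Normalized

variable {R : Type*} [CommRing R] {r : ℕ}

noncomputable def normalizedPoly (r : ℕ) (c : Fin (r - 1) → R) : R[X] :=
  X ^ (r + 1) + ∑ m : Fin (r - 1), C (c m) * X ^ ((m : ℕ) + 1)

def IsNormalized (r : ℕ) (q : R[X]) : Prop :=
  (q - X ^ (r + 1)).natDegree ≤ r - 1 ∧ q.coeff 0 = 0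

theorem isNormalized_normalizedPoly (c : Fin (r - 1) → R) :
    IsNormalized r (normalizedPoly r c) := by
  refine ⟨?_, by simp [normalizedPoly]⟩
  rw [normalizedPoly, add_sub_cancel_left]
  exact natDegree_sum_le_of_forall_le _ _ fun m _ =>
    (natDegree_C_mul_X_pow_le _ _).trans (by omega)

theorem coeff_normalizedPoly_succ (c : Fin (r - 1) → R) (m : Fin (r - 1)) :
    (normalizedPoly r c).coeff ((m : ℕ) + 1) = c m := by
  rw [normalizedPoly, coeff_add, coeff_X_pow, if_neg (by omega), zero_add, finsetSum_coeff,
    Finset.sum_eq_single m]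
  · simp
  · intro k _ hk
    rw [coeff_C_mul_X_pow, if_neg (by omega)]
  · simp

theorem IsNormalized.natDegree_sub_le {p q : R[X]} (hp : IsNormalized r p)
    (hq : IsNormalized r q) : (p - q).natDegree ≤ r - 1 := by
  rw [← sub_sub_sub_cancel_right p q (X ^ (r + 1))]
  exact (Polynomial.natDegree_sub_le _ _).trans (max_le hp.1 hq.1)

theorem IsNormalized.eq_normalizedPoly {q : R[X]} (hq : IsNormalized r q) :
    q = normalizedPoly r fun m => q.coeff ((m : ℕ) + 1) := by
  set p := normalizedPoly r fun m => q.coeff ((m : ℕ) + 1)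
  have hp : IsNormalized r p := isNormalized_normalizedPoly _
  have hdeg := hq.natDegree_sub_le hp
  refine sub_eq_zero.1 (Polynomial.ext fun n => ?_)
  rw [coeff_zero]
  rcases n with _ | m
  · simp [hq.2, hp.2]
  · by_cases hm : m < r - 1
    · rw [coeff_sub, coeff_normalizedPoly_succ (m := ⟨m, hm⟩), sub_self]
    · exact coeff_eq_zero_of_natDegree_lt (by omega)

theorem IsNormalized.eq_of_iterate_derivative_eval_eq_zero [IsDomain R] [CharZero R]
    {p q : R[X]} {a : R} (hp : IsNormalized r p) (hq : IsNormalized r q)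
    (hpa : ∀ l, 1 ≤ l → l ≤ r - 1 → (derivative^[l] p).eval a = 0)
    (hqa : ∀ l, 1 ≤ l → l ≤ r - 1 → (derivative^[l] q).eval a = 0) : p = q := by
  have hconst := eq_C_eval_of_iterate_derivative_eval_eq_zero (hp.natDegree_sub_le hq)
    fun l h1 h2 => by rw [iterate_derivative_sub, eval_sub, hpa l h1 h2, hqa l h1 h2, sub_zero]
  have hzero : (p - q).eval a = 0 := by
    simpa [hp.2, hq.2] using (congrArg (coeff · 0) hconst).symm
  rw [hzero, map_zero] at hconst
  exact sub_eq_zero.1 hconst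

end Normalized

section Contact

variable {R : Type*} [CommRing R] {r : ℕ}

noncomputable def contactPoly (r : ℕ) (a : R) : R[X] :=
  (X - C a) ^ r * (X + C (r * a)) - C ((-a) ^ r * (r * a))

theorem eval_contactPoly_sub_eval (hr : r ≠ 0) (a x : R) :
    (contactPoly r a).eval x - (contactPoly r a).eval a = (x - a) ^ r * (x + r * a) := by
  simp [contactPoly, zero_pow hr]

theorem iterate_derivative_contactPoly_eval {l : ℕ} (hl : 1 ≤ l) (hlr : l < r) (a : R) :
    (derivative^[l] (contactPoly r a)).eval a = 0 := by
  have hdvd := pow_sub_dvd_iterate_derivative_of_pow_dvd l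
    (dvd_mul_right ((X - C a) ^ r) (X + C ((r : R) * a)))
  rw [contactPoly, iterate_derivative_sub, iterate_derivative_C (by omega), sub_zero]
  exact dvd_iff_isRoot.1 ((dvd_pow_self _ (by omega)).trans hdvd)

theorem isNormalized_contactPoly (a : R) : IsNormalized r (contactPoly r a) := by
  refine ⟨natDegree_le_iff_coeff_eq_zero.2 fun N hN => ?_, ?_⟩
  · have hpow (k : ℕ) : ((X - C a) ^ r).coeff k = (-a) ^ (r - k) * (r.choose k) := by
      rw [sub_eq_add_neg, ← C_neg, coeff_X_add_C_pow]
    obtain ⟨n, rfl⟩ : ∃ n, N = n + 1 := ⟨N - 1, by omega⟩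
    rw [contactPoly, mul_add, coeff_sub, coeff_sub, coeff_add, coeff_mul_X, mul_comm, coeff_C_mul,
      hpow, hpow, coeff_C_succ, coeff_X_pow]
    rcases (by omega : n + 1 = r ∨ n = r ∨ r < n) with h | rfl | h
    · subst h
      simp only [add_tsub_cancel_left, pow_one, Nat.choose_succ_self_right, Nat.cast_add,
        Nat.cast_one, neg_mul, tsub_self, pow_zero, Nat.choose_self, mul_one, sub_zero,
        Nat.left_eq_add, one_ne_zero, ↓reduceIte]
      ring
    · simp
    · simp [Nat.choose_eq_zero_of_lt, h, (by omega : r < n + 1), h.ne']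
  · rw [coeff_zero_eq_eval_zero]
    simp [contactPoly]

end Contact

section Solution

variable {K : Type*} [Field K] [CharZero K] {r : ℕ}

theorem normalizedPoly_eq_contactPoly {c : Fin (r - 1) → K} {a : K}
    (h : ∀ l, 1 ≤ l → l ≤ r - 1 → (derivative^[l] (normalizedPoly r c)).eval a = 0) :
    normalizedPoly r c = contactPoly r a :=
  (isNormalized_normalizedPoly c).eq_of_iterate_derivative_eval_eq_zero
    (isNormalized_contactPoly a) h fun _ hl hlr =>
      iterate_derivative_contactPoly_eval hl (by omega) a

def IsContactSolution (r : ℕ) (b : K) (s : K × (Fin (r - 1) → K)) : Prop :=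
  s.1 ≠ b ∧
    (∀ l : ℕ, 1 ≤ l → l ≤ r - 1 →
      (derivative^[l] (normalizedPoly r s.2)).eval s.1 = 0) ∧
    (normalizedPoly r s.2).eval s.1 = (normalizedPoly r s.2).eval b

theorem isContactSolution_iff (hr : 1 ≤ r) {b : K} (hb : b ≠ 0)
    (s : K × (Fin (r - 1) → K)) :
    IsContactSolution r b s ↔
      s = (-b / r, fun m : Fin (r - 1) => (contactPoly r (-b / r)).coeff ((m : ℕ) + 1)) := by
  have hr0 : (r : K) ≠ 0 := Nat.cast_ne_zero.2 (by omega)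
  constructor
  · rintro ⟨hab, hder, heval⟩
    have hp := normalizedPoly_eq_contactPoly hder
    have hroot : (b - s.1) ^ r * (b + r * s.1) = 0 := by
      rw [← eval_contactPoly_sub_eval (by omega), ← hp, heval, sub_self]
    have ha : s.1 = -b / r := by
      rw [eq_div_iff hr0]
      have hba : (b - s.1) ^ r ≠ 0 := pow_ne_zero r (sub_ne_zero.2 hab.symm)
      linear_combination (mul_eq_zero.1 hroot).resolve_left hba
    refine Prod.ext ha (funext fun m => ?_)
    exact (coeff_normalizedPoly_succ s.2 m).symm.trans (by rw [hp, ha])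
  · rintro rfl
    have hp := (isNormalized_contactPoly (r := r) (-b / r)).eq_normalizedPoly.symm
    refine ⟨?_, ?_, ?_⟩
    · intro h
      have : (r + 1 : K) * b = 0 := by
        rw [div_eq_iff hr0] at h
        linear_combination -h
      exact hb ((mul_eq_zero.1 this).resolve_left (Nat.cast_add_one_ne_zero r))
    · intro l hl hlr
      rw [hp]
      exact iterate_derivative_contactPoly_eval hl (by omega) _
    · rw [hp, ← sub_eq_zero, ← neg_sub, eval_contactPoly_sub_eval (by omega)]
      field_simp
      ring

end Solution

/-- For every `b > 0` there is a unique `a ≠ b` together with a unique tuple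
`(λ_1,…,λ_{r-1})` such that `p = X^{r+1} + ∑_{m=1}^{r-1} λ_m X^m` satisfies
`p^{(l)}(a) = 0` for every `1 ≤ l ≤ r-1` and `p(a) = p(b)`; moreover this unique
`a` equals `-b/r`. -/
theorem stmt14 (r : ℕ) (hr : 1 ≤ r) (b : ℝ) (hb : 0 < b) :
    (∃! al : ℝ × (Fin (r - 1) → ℝ),
      al.1 ≠ b ∧
      (∀ l : ℕ, 1 ≤ l → l ≤ r - 1 →
        (derivative^[l]
          (X ^ (r + 1) + ∑ m : Fin (r - 1), C (al.2 m) * X ^ ((m : ℕ) + 1))).eval al.1 = 0) ∧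
      (X ^ (r + 1) + ∑ m : Fin (r - 1), C (al.2 m) * X ^ ((m : ℕ) + 1)).eval al.1 =
        (X ^ (r + 1) + ∑ m : Fin (r - 1), C (al.2 m) * X ^ ((m : ℕ) + 1)).eval b) ∧
    (∀ al : ℝ × (Fin (r - 1) → ℝ),
      (al.1 ≠ b ∧
        (∀ l : ℕ, 1 ≤ l → l ≤ r - 1 →
          (derivative^[l]
            (X ^ (r + 1) + ∑ m : Fin (r - 1), C (al.2 m) * X ^ ((m : ℕ) + 1))).eval al.1 = 0) ∧
        (X ^ (r + 1) + ∑ m : Fin (r - 1), C (al.2 m) * X ^ ((m : ℕ) + 1)).eval al.1 =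
          (X ^ (r + 1) + ∑ m : Fin (r - 1), C (al.2 m) * X ^ ((m : ℕ) + 1)).eval b) →
      al.1 = -b / r) := by
  have key := isContactSolution_iff hr hb.ne'
  exact ⟨⟨_, (key _).2 rfl, fun s hs => (key s).1 hs⟩,
    fun s hs => congrArg Prod.fst ((key s).1 hs)⟩
end
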